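/- arXiv:2311.15172 — 4 statements merged into one kernel-verified Lean document; each statement's English description precedes it below -/
import Mathlib

section
/- Suppose n, b, r ≥ 1 are integers satisfying b ≤ (n - r² + 1)/(r + 1). Then C(n, r) ≤ n^r / r! ≤ e · C(n - b, r), where e is Euler's constant. -/
theorem stmt_2 (n b r : ℕ) (hn : 1 ≤ n) (hb : 1 ≤ b) (hr : 1 ≤ r)
    (hbound : (b : ℝ) ≤ ((n : ℝ) - (r : ℝ) ^ 2 + 1) / ((r : ℝ) + 1)) :
    ((n.choose r : ℝ)) ≤ (n : ℝ) ^ r / (r.factorial : ℝ) ∧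
      (n : ℝ) ^ r / (r.factorial : ℝ) ≤ Real.exp 1 * ((n - b).choose r : ℝ) := by
  have hrR : (1 : ℝ) ≤ (r : ℝ) := by exact_mod_cast hr
  have hbR : (1 : ℝ) ≤ (b : ℝ) := by exact_mod_cast hb
  have hrpos : (0 : ℝ) < (r : ℝ) + 1 := by linarith
  have hb1 : (b : ℝ) * ((r : ℝ) + 1) ≤ (n : ℝ) - (r : ℝ) ^ 2 + 1 :=
    (le_div_iff₀ hrpos).mp hbound
  -- D = b + r - 1, s = n - D
  set D : ℝ := (b : ℝ) + (r : ℝ) - 1 with hD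
  set s : ℝ := (n : ℝ) - D with hs
  have hD1 : (1 : ℝ) ≤ D := by simp [hD]; linarith
  have hDn : D * ((r : ℝ) + 1) ≤ (n : ℝ) := by nlinarith
  have hrs : (r : ℝ) * D ≤ s := by simp [hs]; nlinarith
  have hs1 : (1 : ℝ) ≤ s := by nlinarith
  have hspos : (0 : ℝ) < s := by linarith
  -- b + r ≤ n
  have hbrn : (b : ℝ) + (r : ℝ) ≤ (n : ℝ) := by nlinarith
  have hbrnN : b + r ≤ n := by exact_mod_cast hbrn
  have hbn : b ≤ n := le_trans (Nat.le_add_right b r) hbrnN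
  have hrm : r ≤ n - b := Nat.le_sub_of_add_le (by omega)
  have hcast : ((n - b : ℕ) : ℝ) = (n : ℝ) - (b : ℝ) := by
    exact Nat.cast_sub hbn
  -- s = cast of (n - b) + 1 - r
  have hscast : s = ((n - b + 1 - r : ℕ) : ℝ) := by
    have h1 : r ≤ n - b + 1 := le_trans hrm (Nat.le_succ _)
    rw [Nat.cast_sub h1, Nat.cast_add, hcast]
    simp [hs, hD]; ring
  -- n ≤ s * exp (1/r)
  have hrne : (r : ℝ) ≠ 0 := by linarith
  have hn_le : (n : ℝ) ≤ s * (1 + 1 / (r : ℝ)) := by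
    have : D ≤ s / (r : ℝ) := by rw [le_div_iff₀ (by linarith)]; nlinarith
    have h2 : (n : ℝ) = s + D := by simp [hs]
    rw [h2, mul_add, mul_one, mul_one_div]
    linarith
  have hexp : (1 : ℝ) + 1 / (r : ℝ) ≤ Real.exp (1 / (r : ℝ)) := by
    have := Real.add_one_le_exp (1 / (r : ℝ)); linarith
  have hns : (n : ℝ) ≤ s * Real.exp (1 / (r : ℝ)) := by
    refine hn_le.trans ?_
    exact mul_le_mul_of_nonneg_left hexp (le_of_lt hspos)
  have hnpos : (0 : ℝ) ≤ (n : ℝ) := Nat.cast_nonneg n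
  have hpow : (n : ℝ) ^ r ≤ s ^ r * Real.exp 1 := by
    calc (n : ℝ) ^ r ≤ (s * Real.exp (1 / (r : ℝ))) ^ r :=
          pow_le_pow_left₀ hnpos hns r
      _ = s ^ r * Real.exp (1 / (r : ℝ)) ^ r := mul_pow _ _ _
      _ = s ^ r * Real.exp 1 := by
          rw [← Real.exp_nat_mul]
          congr 1
          field_simp
  -- s^r ≤ descFactorial (n-b) r = r! * choose (n-b) r
  have hdesc : s ^ r ≤ ((r.factorial * (n - b).choose r : ℕ) : ℝ) := by
    rw [hscast]
    have := Nat.pow_sub_le_descFactorial (n - b) r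
    rw [Nat.descFactorial_eq_factorial_mul_choose] at this
    have h3 : (n - b + 1 - r) ^ r ≤ r.factorial * (n - b).choose r := by
      simpa using this
    exact_mod_cast h3
  have hfac : (0 : ℝ) < (r.factorial : ℝ) := by exact_mod_cast r.factorial_pos
  constructor
  · exact Nat.choose_le_pow_div r n
  · rw [div_le_iff₀ hfac]
    have hepos : (0 : ℝ) < Real.exp 1 := Real.exp_pos 1
    calc (n : ℝ) ^ r ≤ s ^ r * Real.exp 1 := hpow
      _ ≤ ((r.factorial * (n - b).choose r : ℕ) : ℝ) * Real.exp 1 :=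
          mul_le_mul_of_nonneg_right hdesc (le_of_lt hepos)
      _ = Real.exp 1 * ((n - b).choose r : ℝ) * (r.factorial : ℝ) := by
          push_cast; ring
end

section
/- Let m ≥ r ≥ 2 be integers, F an r-graph on m vertices, and δ ∈ [0, 1/m] a real number. Suppose t is a positive integer with t ≤ min{δmn/(r-1) - r, n/m}. Then every n-vertex r-graph H containing no t+1 pairwise vertex-disjoint copies of F and satisfying Δ(H) ≤ (1/m - δ)·C(n-1, r-1) has at most C(n, r) - C(n-t, r) + ex(n-t, F) edges. -/
open Finset

/-- An `r`-uniform hypergraph: every edge has `r` vertices. -/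
def IsUniformHG {α : Type*} (r : ℕ) (H : Finset (Finset α)) : Prop :=
  ∀ e ∈ H, e.card = r

/-- `H` contains a copy of the hypergraph `F`. -/
def HasCopyHG {α β : Type*} [DecidableEq α] [DecidableEq β]
    (F : Finset (Finset α)) (H : Finset (Finset β)) : Prop :=
  ∃ f : α → β, Function.Injective f ∧ ∀ e ∈ F, e.image f ∈ H

/-- `H` contains `k` pairwise vertex-disjoint copies of `F`. -/
def HasDisjCopiesHG {α β : Type*} [DecidableEq α] [DecidableEq β]
    (F : Finset (Finset α)) (H : Finset (Finset β)) (k : ℕ) : Prop :=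
  ∃ f : Fin k → α → β,
    (∀ i, Function.Injective (f i) ∧ ∀ e ∈ F, e.image (f i) ∈ H) ∧
    ∀ i j, i ≠ j → ∀ a b, f i a ≠ f j b

/-- The Turán number `ex(n, F)` of an `r`-graph `F`. -/
noncomputable def exHG {α : Type*} [DecidableEq α] (n r : ℕ) (F : Finset (Finset α)) : ℕ :=
  sSup {k | ∃ H : Finset (Finset (Fin n)), IsUniformHG r H ∧ ¬ HasCopyHG F H ∧ H.card = k}

/-- The maximum degree of a hypergraph. -/
def maxDegHG {β : Type*} [Fintype β] [DecidableEq β] (H : Finset (Finset β)) : ℕ :=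
  Finset.univ.sup fun v : β => (H.filter fun e => v ∈ e).card

lemma chooseN1' (n r : ℕ) (hr : 1 ≤ r) :
    ∀ t, t ≤ n → (n-t).choose r + t * (n-t).choose (r-1) ≤ n.choose r := by
  intro t
  induction t with
  | zero => simp
  | succ t ih =>
    intro h
    have ht : t ≤ n := by omega
    have h1 : n - t = (n - (t+1)) + 1 := by omega
    have hr' : r - 1 + 1 = r := by omega
    have pascal : (n - t).choose r = (n - (t+1)).choose (r-1) + (n-(t+1)).choose r := by
      rw [h1, ← hr', Nat.choose_succ_succ]
      simp [Nat.succ_eq_add_one, hr']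
    have mono : (n - (t+1)).choose (r-1) ≤ (n - t).choose (r-1) :=
      Nat.choose_le_choose _ (by omega)
    calc (n-(t+1)).choose r + (t+1) * (n-(t+1)).choose (r-1)
        = ((n-(t+1)).choose r + (n-(t+1)).choose (r-1)) + t * (n-(t+1)).choose (r-1) := by ring
      _ ≤ (n-t).choose r + t * (n-t).choose (r-1) := by
          rw [pascal]; have := Nat.mul_le_mul_left t mono; omega
      _ ≤ n.choose r := ih ht

lemma chooseN2' (n r : ℕ) (hr : 2 ≤ r) :
    ∀ t, 1 ≤ t → t ≤ n - 1 →
      (n-1).choose (r-1) ≤ (n-t).choose (r-1) + (t-1) * (n-2).choose (r-2) := by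
  intro t
  induction t with
  | zero => omega
  | succ t ih =>
    intro _ h
    rcases Nat.eq_zero_or_pos t with rfl | htpos
    · simp
    have ih' := ih htpos (by omega)
    have h1 : n - t = (n - (t+1)) + 1 := by omega
    have hr' : r - 2 + 1 = r - 1 := by omega
    have pascal : (n - t).choose (r-1) = (n - (t+1)).choose (r-2) + (n-(t+1)).choose (r-1) := by
      rw [h1, ← hr', Nat.choose_succ_succ]
    have mono : (n - (t+1)).choose (r-2) ≤ (n - 2).choose (r-2) :=
      Nat.choose_le_choose _ (by omega)
    have expand : (t+1-1) * (n-2).choose (r-2)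
        = (t-1) * (n-2).choose (r-2) + (n-2).choose (r-2) := by
      have h2 : t + 1 - 1 = (t - 1) + 1 := by omega
      rw [h2]; ring
    calc (n-1).choose (r-1) ≤ (n-t).choose (r-1) + (t-1) * (n-2).choose (r-2) := ih'
      _ = (n-(t+1)).choose (r-2) + (n-(t+1)).choose (r-1) + (t-1) * (n-2).choose (r-2) := by
          rw [pascal]
      _ ≤ (n-(t+1)).choose (r-1) + (t+1-1) * (n-2).choose (r-2) := by
          rw [expand]; omega

lemma handshakeHG {n r : ℕ} (H : Finset (Finset (Fin n))) (hH : IsUniformHG r H) :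
    r * H.card ≤ n * maxDegHG H := by
  have key : ∑ v : Fin n, (H.filter fun e => v ∈ e).card = ∑ e ∈ H, e.card := by
    simp only [Finset.card_filter]
    rw [Finset.sum_comm]
    congr 1
    ext e
    rw [← Finset.card_filter, Finset.filter_univ_mem]
  have h1 : ∑ e ∈ H, e.card = r * H.card := by
    rw [Finset.sum_congr rfl hH]
    simp [mul_comm]
  have h2 : ∑ v : Fin n, (H.filter fun e => v ∈ e).card ≤ n * maxDegHG H := by
    calc ∑ v : Fin n, (H.filter fun e => v ∈ e).card
        ≤ ∑ _v : Fin n, maxDegHG H :=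
          Finset.sum_le_sum fun v _ =>
            Finset.le_sup (f := fun v : Fin n => (H.filter fun e => v ∈ e).card)
              (Finset.mem_univ v)
      _ = n * maxDegHG H := by simp [Finset.sum_const, Finset.card_univ]
  omega

lemma exHG_ge' {m ν r : ℕ} (F : Finset (Finset (Fin m))) (K : Finset (Finset (Fin ν)))
    (hK : IsUniformHG r K) (hfree : ¬ HasCopyHG F K) : K.card ≤ exHG ν r F := by
  apply le_csSup
  · refine ⟨2 ^ ν, ?_⟩
    rintro k ⟨H, -, -, rfl⟩
    simpa using Finset.card_le_univ H
  · exact ⟨K, hK, hfree, rfl⟩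

lemma chooseRatio' {a n r : ℕ} (han : a ≤ n) (hr : 2 ≤ r) (hra : r ≤ a) :
    a.choose r * n.choose 2 ≤ n.choose r * a.choose 2 := by
  have h1 : a.choose r * r.choose 2 = a.choose 2 * (a-2).choose (r-2) :=
    Nat.choose_mul hr
  have h2 : n.choose r * r.choose 2 = n.choose 2 * (n-2).choose (r-2) :=
    Nat.choose_mul hr
  have hmono : (a-2).choose (r-2) ≤ (n-2).choose (r-2) := Nat.choose_le_choose _ (by omega)
  have hpos : 0 < r.choose 2 := Nat.choose_pos hr
  have h3 : a.choose r * r.choose 2 * n.choose 2 ≤ n.choose r * r.choose 2 * a.choose 2 := by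
    rw [h1, h2]
    calc a.choose 2 * (a-2).choose (r-2) * n.choose 2
        ≤ a.choose 2 * (n-2).choose (r-2) * n.choose 2 :=
          Nat.mul_le_mul_right _ (Nat.mul_le_mul_left _ hmono)
      _ = n.choose 2 * (n-2).choose (r-2) * a.choose 2 := by ring
  nlinarith [h3, hpos]

lemma coreA {m r n t : ℕ} (F : Finset (Finset (Fin m))) (H : Finset (Finset (Fin n)))
    (hH : IsUniformHG r H) (hF : IsUniformHG r F) (hm1 : 1 ≤ m) (ht1 : 1 ≤ t)
    (hfree : ¬ HasDisjCopiesHG F H (t + 1)) (hn : (t+1) * m ≤ n) :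
    H.card ≤ m * t * maxDegHG H + exHG (n - t) r F := by
  classical
  set P : ℕ → Prop := fun k => HasDisjCopiesHG F H k with hPdef
  have hP0 : P 0 := by
    refine ⟨fun i => i.elim0, fun i => i.elim0, fun i => i.elim0⟩
  set s : ℕ := Nat.findGreatest P t with hsdef
  have hs_le : s ≤ t := Nat.findGreatest_le t
  have hPs : P s := Nat.findGreatest_spec (Nat.zero_le t) hP0
  have hns : ¬ P (s+1) := by
    rcases eq_or_lt_of_le hs_le with h | h
    · rw [h]; exact hfree
    · exact Nat.findGreatest_is_greatest (n := t) (by omega) (by omega)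
  obtain ⟨f, hf, hdisj⟩ := hPs
  set S0 : Finset (Fin n) := Finset.univ.biUnion fun i : Fin s =>
    Finset.image (f i) Finset.univ with hS0def
  have hfS0 : ∀ (i : Fin s) (a : Fin m), f i a ∈ S0 := by
    intro i a
    exact Finset.mem_biUnion.mpr ⟨i, Finset.mem_univ i,
      Finset.mem_image_of_mem _ (Finset.mem_univ a)⟩
  have hS0card : S0.card ≤ s * m := by
    calc S0.card ≤ ∑ i : Fin s, (Finset.image (f i) Finset.univ).card :=
          Finset.card_biUnion_le
      _ ≤ ∑ _i : Fin s, m := by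
          refine Finset.sum_le_sum fun i _ => ?_
          simpa using (Finset.card_image_le (s := (Finset.univ : Finset (Fin m))) (f := f i))
      _ = s * m := by simp [Finset.sum_const, Finset.card_univ]
  have hmtn : m * t ≤ n := by nlinarith
  obtain ⟨S, hS0S, hScard⟩ := Finset.exists_superset_card_eq
    (n := m * t) (s := S0) (by nlinarith) (by simpa using hmtn)
  set H1 : Finset (Finset (Fin n)) := H.filter fun e => ∃ v ∈ e, v ∈ S with hH1def
  set H2 : Finset (Finset (Fin n)) := H.filter fun e => ¬ ∃ v ∈ e, v ∈ S with hH2def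
  have hsplit : H1.card + H2.card = H.card :=
    Finset.card_filter_add_card_filter_not _
  have hH1card : H1.card ≤ m * t * maxDegHG H := by
    have hsub : H1 ⊆ S.biUnion fun v => H.filter fun e => v ∈ e := by
      intro e he
      rw [hH1def, Finset.mem_filter] at he
      obtain ⟨v, hve, hvS⟩ := he.2
      exact Finset.mem_biUnion.mpr ⟨v, hvS, Finset.mem_filter.mpr ⟨he.1, hve⟩⟩
    calc H1.card ≤ (S.biUnion fun v => H.filter fun e => v ∈ e).card :=
          Finset.card_le_card hsub
      _ ≤ ∑ v ∈ S, (H.filter fun e => v ∈ e).card := Finset.card_biUnion_le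
      _ ≤ ∑ _v ∈ S, maxDegHG H := by
          refine Finset.sum_le_sum fun v _ => ?_
          exact Finset.le_sup (f := fun v : Fin n => (H.filter fun e => v ∈ e).card)
            (Finset.mem_univ v)
      _ = m * t * maxDegHG H := by rw [Finset.sum_const, hScard]; simp [mul_comm]
  have hH2sub : ∀ e ∈ H2, ∀ v ∈ e, v ∈ Sᶜ := by
    intro e he v hv
    rw [hH2def, Finset.mem_filter] at he
    simp only [Finset.mem_compl]
    exact fun hvS => he.2 ⟨v, hv, hvS⟩
  have hCcard : (Sᶜ : Finset (Fin n)).card = n - m * t := by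
    rw [Finset.card_compl, hScard]; simp
  have hnt1 : 1 ≤ n - t := by
    have h' : t + 1 ≤ (t+1)*m := Nat.le_mul_of_pos_right _ hm1
    omega
  have hcard_le : Fintype.card (Sᶜ : Finset (Fin n)) ≤ Fintype.card (Fin (n - t)) := by
    rw [Fintype.card_coe, hCcard, Fintype.card_fin]
    have : t ≤ m * t := Nat.le_mul_of_pos_left t hm1
    omega
  obtain ⟨ι⟩ := Function.Embedding.nonempty_of_card_le hcard_le
  set g : Fin n → Fin (n - t) := fun x =>
    if h : x ∈ Sᶜ then ι ⟨x, h⟩ else ⟨0, by omega⟩ with hgdef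
  have hginj : ∀ x ∈ Sᶜ, ∀ y ∈ Sᶜ, g x = g y → x = y := by
    intro x hx y hy hxy
    rw [hgdef] at hxy
    simp only [dif_pos hx, dif_pos hy] at hxy
    exact Subtype.ext_iff.mp (ι.injective hxy)
  set K : Finset (Finset (Fin (n - t))) := H2.image (Finset.image g) with hKdef
  have himg_inj : ∀ E1 ∈ H2, ∀ E2 ∈ H2, E1.image g = E2.image g → E1 = E2 := by
    have key : ∀ E1 ∈ H2, ∀ E2 ∈ H2, E1.image g = E2.image g → E1 ⊆ E2 := by
      intro E1 h1 E2 h2 heq x hx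
      have : g x ∈ E2.image g := heq ▸ Finset.mem_image_of_mem g hx
      obtain ⟨y, hy, hgy⟩ := Finset.mem_image.mp this
      have := hginj y (hH2sub E2 h2 y hy) x (hH2sub E1 h1 x hx) hgy
      exact this ▸ hy
    intro E1 h1 E2 h2 heq
    exact Finset.Subset.antisymm (key E1 h1 E2 h2 heq) (key E2 h2 E1 h1 heq.symm)
  have hKcard : K.card = H2.card := by
    rw [hKdef]
    apply Finset.card_image_of_injOn
    intro E1 h1 E2 h2
    exact himg_inj E1 h1 E2 h2
  have hKuniform : IsUniformHG r K := by
    intro e' he'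
    obtain ⟨E, hE, rfl⟩ := Finset.mem_image.mp he'
    rw [Finset.card_image_of_injOn fun x hx y hy =>
      hginj x (hH2sub E hE x hx) y (hH2sub E hE y hy)]
    exact hH E (Finset.mem_of_mem_filter E hE)
  have hKfree : ¬ HasCopyHG F K := by
    rintro ⟨h, hinj, hmap⟩
    set V : Finset (Fin m) := F.biUnion id with hVdef
    have hmem : ∀ a : Fin m, ∃ x : Fin n, a ∈ V → (x ∈ Sᶜ ∧ g x = h a) := by
      intro a
      by_cases ha : a ∈ V
      · obtain ⟨e, he, hae⟩ := Finset.mem_biUnion.mp ha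
        have h1 : e.image h ∈ K := hmap e he
        obtain ⟨E, hE, hEeq⟩ := Finset.mem_image.mp h1
        have : h a ∈ E.image g := hEeq ▸ Finset.mem_image_of_mem h hae
        obtain ⟨x, hx, hgx⟩ := Finset.mem_image.mp this
        exact ⟨x, fun _ => ⟨hH2sub E hE x hx, hgx⟩⟩
      · exact ⟨⟨0, by omega⟩, fun h' => absurd h' ha⟩
    choose g₀ hg₀ using hmem
    have hg₀inj : ∀ a ∈ V, ∀ b ∈ V, g₀ a = g₀ b → a = b := by
      intro a ha b hb hab
      apply hinj
      rw [← (hg₀ a ha).2, ← (hg₀ b hb).2, hab]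
    have hedge : ∀ e ∈ F, e.image g₀ ∈ H2 := by
      intro e he
      have h1 : e.image h ∈ K := hmap e he
      obtain ⟨E, hE, hEeq⟩ := Finset.mem_image.mp h1
      have hsub : e.image g₀ ⊆ E := by
        intro x hx
        obtain ⟨a, ha, rfl⟩ := Finset.mem_image.mp hx
        have haV : a ∈ V := Finset.mem_biUnion.mpr ⟨e, he, ha⟩
        have : g (g₀ a) ∈ E.image g := by
          rw [(hg₀ a haV).2, hEeq]
          exact Finset.mem_image_of_mem h ha
        obtain ⟨y, hy, hgy⟩ := Finset.mem_image.mp this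
        have := hginj y (hH2sub E hE y hy) (g₀ a) (hg₀ a haV).1 hgy
        exact this ▸ hy
      have hc2 : (e.image g₀).card = e.card := by
        apply Finset.card_image_of_injOn
        intro a ha b hb hab
        exact hg₀inj a (Finset.mem_biUnion.mpr ⟨e, he, ha⟩) b
          (Finset.mem_biUnion.mpr ⟨e, he, hb⟩) hab
      have hcards : E.card ≤ (e.image g₀).card := by
        rw [hc2, hF e he, hH E (Finset.mem_of_mem_filter E hE)]
      rw [Finset.eq_of_subset_of_card_le hsub hcards]
      exact hE
    set A : Finset (Fin n) := V.image g₀ with hAdef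
    have hAC : ∀ x ∈ A, x ∈ Sᶜ := by
      intro x hx
      obtain ⟨a, ha, rfl⟩ := Finset.mem_image.mp hx
      exact (hg₀ a ha).1
    have hAcard : A.card = V.card :=
      Finset.card_image_of_injOn fun a ha b hb => hg₀inj a ha b hb
    have hAS0 : ∀ x ∈ A, x ∉ S0 := by
      intro x hx hx0
      have := hAC x hx
      rw [Finset.mem_compl] at this
      exact this (hS0S hx0)
    set B : Finset (Fin n) := Finset.univ \ (S0 ∪ A) with hBdef
    have hVcard : V.card ≤ m := by simpa using Finset.card_le_univ V
    have hBcard : m - V.card ≤ B.card := by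
      have h1 : (S0 ∪ A).card ≤ s * m + V.card := by
        calc (S0 ∪ A).card ≤ S0.card + A.card := Finset.card_union_le _ _
          _ ≤ s * m + V.card := by rw [hAcard]; omega
      have h2 : B.card = n - (S0 ∪ A).card := by
        rw [hBdef, Finset.card_sdiff_of_subset (Finset.subset_univ _)]
        simp
      have h3 : s * m ≤ t * m := Nat.mul_le_mul_right m hs_le
      have h4 : (t+1) * m = t * m + m := by ring
      omega
    have hjcard : Fintype.card ((Finset.univ \ V : Finset (Fin m)) : Finset (Fin m)) ≤ B.card := by
      rw [Fintype.card_coe, Finset.card_sdiff_of_subset (Finset.subset_univ _)]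
      simpa using hBcard
    obtain ⟨j, hjran⟩ := Function.Embedding.exists_of_card_le_finset hjcard
    set G : Fin m → Fin n := fun a =>
      if h : a ∈ V then g₀ a else j ⟨a, by simp [h]⟩ with hGdef
    have hGV : ∀ a ∈ V, G a = g₀ a := by
      intro a ha; rw [hGdef]; simp [ha]
    have hGB : ∀ (a : Fin m) (_ : a ∉ V), G a ∈ B := by
      intro a ha
      rw [hGdef]
      simp only [dif_neg ha]
      exact hjran (Set.mem_range_self _)
    have hGnotS0 : ∀ a : Fin m, G a ∉ S0 := by
      intro a
      by_cases ha : a ∈ V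
      · rw [hGV a ha]
        intro hc
        exact hAS0 (g₀ a) (Finset.mem_image_of_mem g₀ ha) hc
      · have := hGB a ha
        rw [hBdef, Finset.mem_sdiff] at this
        intro hc
        exact this.2 (Finset.mem_union_left _ hc)
    have hGinj : Function.Injective G := by
      intro a b hab
      by_cases ha : a ∈ V <;> by_cases hb : b ∈ V
      · exact hg₀inj a ha b hb (by rwa [hGV a ha, hGV b hb] at hab)
      · exfalso
        have h1 : G a ∈ A := by rw [hGV a ha]; exact Finset.mem_image_of_mem g₀ ha
        have h2 := hGB b hb
        rw [hBdef, Finset.mem_sdiff] at h2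
        exact h2.2 (Finset.mem_union_right _ (hab ▸ h1))
      · exfalso
        have h1 : G b ∈ A := by rw [hGV b hb]; exact Finset.mem_image_of_mem g₀ hb
        have h2 := hGB a ha
        rw [hBdef, Finset.mem_sdiff] at h2
        exact h2.2 (Finset.mem_union_right _ (hab ▸ h1))
      · have : (⟨a, by simp [ha]⟩ : ((Finset.univ \ V : Finset (Fin m)) : Finset (Fin m)))
            = ⟨b, by simp [hb]⟩ := by
          apply j.injective
          rw [hGdef] at hab
          simpa [dif_neg ha, dif_neg hb] using hab
        exact Subtype.ext_iff.mp this
    apply hns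
    refine ⟨Fin.snoc f G, ?_, ?_⟩
    · intro i
      refine Fin.lastCases ?_ ?_ i
      · rw [Fin.snoc_last]
        refine ⟨hGinj, fun e he => ?_⟩
        have h1 : e.image G = e.image g₀ := by
          apply Finset.image_congr
          intro a ha
          exact hGV a (Finset.mem_biUnion.mpr ⟨e, he, ha⟩)
        rw [h1]
        exact Finset.mem_of_mem_filter _ (hedge e he)
      · intro i'
        rw [Fin.snoc_castSucc]
        exact hf i'
    · intro i jj hij a b
      rcases Fin.eq_castSucc_or_eq_last i with ⟨i', rfl⟩ | rfl <;>
        rcases Fin.eq_castSucc_or_eq_last jj with ⟨j', rfl⟩ | rfl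
      · simp only [Fin.snoc_castSucc]
        exact hdisj i' j' (fun hc => hij (by rw [hc])) a b
      · simp only [Fin.snoc_castSucc, Fin.snoc_last]
        intro heq
        exact hGnotS0 b (heq ▸ hfS0 i' a)
      · simp only [Fin.snoc_castSucc, Fin.snoc_last]
        intro heq
        exact hGnotS0 a (heq.symm ▸ hfS0 j' b)
      · exact absurd rfl hij
  have hH2card : H2.card ≤ exHG (n - t) r F := by
    rw [← hKcard]
    exact exHG_ge' F K hKuniform hKfree
  omega

set_option maxHeartbeats 2000000 in
theorem stmt_11 (m r n t : ℕ) (hr : 2 ≤ r) (hm : r ≤ m)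
    (F : Finset (Finset (Fin m))) (hF : IsUniformHG r F)
    (δ : ℝ) (hδ0 : 0 ≤ δ) (hδ1 : δ ≤ 1 / m)
    (ht1 : 1 ≤ t)
    (ht : (t : ℝ) ≤ min (δ * m * n / (r - 1) - r) ((n : ℝ) / m))
    (H : Finset (Finset (Fin n))) (hH : IsUniformHG r H)
    (hfree : ¬ HasDisjCopiesHG F H (t + 1))
    (hΔ : (maxDegHG H : ℝ) ≤ (1 / m - δ) * ((n - 1).choose (r - 1) : ℝ)) :
    H.card ≤ n.choose r - (n - t).choose r + exHG (n - t) r F := by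
  have hmR : (2:ℝ) ≤ (m:ℝ) := by exact_mod_cast le_trans hr hm
  have hm0 : (0:ℝ) < (m:ℝ) := by linarith
  have hrR : (2:ℝ) ≤ (r:ℝ) := by exact_mod_cast hr
  have hr1 : (0:ℝ) < (r:ℝ) - 1 := by linarith
  have htR : (1:ℝ) ≤ (t:ℝ) := by exact_mod_cast ht1
  obtain ⟨hta, htb⟩ := le_min_iff.mp ht
  -- t * m ≤ n
  have htm_nR : (t:ℝ) * m ≤ n := (le_div_iff₀ hm0).mp htb
  have htm_n : t * m ≤ n := by exact_mod_cast htm_nR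
  -- (t+r)(r-1) ≤ δ m n
  have hkey : ((t:ℝ) + r) * ((r:ℝ) - 1) ≤ δ * m * n := by
    have h1 : (t:ℝ) + r ≤ δ * m * n / ((r:ℝ) - 1) := by linarith
    calc ((t:ℝ) + r) * ((r:ℝ) - 1) ≤ (δ * m * n / ((r:ℝ) - 1)) * ((r:ℝ) - 1) :=
          mul_le_mul_of_nonneg_right h1 (by linarith)
      _ = δ * m * n := by field_simp
  have hδm1 : δ * m ≤ 1 := by
    calc δ * m ≤ (1/m) * m := mul_le_mul_of_nonneg_right hδ1 (by linarith)
      _ = 1 := by field_simp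
  have hn0 : (0:ℝ) ≤ n := Nat.cast_nonneg n
  have htrnR : (t:ℝ) + r ≤ n := by nlinarith
  have htrn : t + r ≤ n := by exact_mod_cast htrnR
  have hnR : ((n:ℝ)) ≥ 3 := by linarith
  -- casts for subtraction
  have hcast_nt : ((n - t : ℕ) : ℝ) = (n:ℝ) - t := by
    rw [Nat.cast_sub (by omega)]
  have hcast_n1 : ((n - 1 : ℕ) : ℝ) = (n:ℝ) - 1 := by
    rw [Nat.cast_sub (by omega)]; simp
  by_cases hcase : (t+1) * m ≤ n
  · -- main case
    have hcore := coreA F H hH hF (by omega) ht1 hfree hcase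
    -- ℕ inequality N1
    have hN1 := chooseN1' n r (by omega) t (by omega)
    have hN2 := chooseN2' n r hr t ht1 (by omega)
    -- identity (n-1) * C(n-2,r-2) = C(n-1,r-1) * (r-1)
    have hid : (n - 1) * (n-2).choose (r-2) = (n-1).choose (r-1) * (r-1) := by
      have := Nat.add_one_mul_choose_eq (n-2) (r-2)
      have e1 : n - 2 + 1 = n - 1 := by omega
      have e2 : r - 2 + 1 = r - 1 := by omega
      rw [e1, e2] at this
      exact this
    set C1 : ℝ := ((n-1).choose (r-1) : ℝ) with hC1
    set C2 : ℝ := ((n-t).choose (r-1) : ℝ) with hC2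
    set C3 : ℝ := ((n-2).choose (r-2) : ℝ) with hC3
    have hC3nn : (0:ℝ) ≤ C3 := Nat.cast_nonneg _
    have hidR : ((n:ℝ) - 1) * C3 = C1 * ((r:ℝ) - 1) := by
      rw [hC1, hC3,
        show ((n:ℝ) - 1) = ((n - 1 : ℕ) : ℝ) by rw [Nat.cast_sub (by omega)]; simp,
        show ((r:ℝ) - 1) = ((r - 1 : ℕ) : ℝ) by rw [Nat.cast_sub (by omega)]; simp]
      exact_mod_cast congrArg (Nat.cast : ℕ → ℝ) hid
    have h9 : ((t:ℝ) - 1) * ((r:ℝ) - 1) ≤ δ * m * ((n:ℝ) - 1) := by nlinarith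
    have h10 : ((t:ℝ) - 1) * C3 ≤ δ * m * C1 := by
      have h11 : (((t:ℝ) - 1) * C3) * ((r:ℝ) - 1) ≤ (δ * m * C1) * ((r:ℝ) - 1) := by
        calc (((t:ℝ) - 1) * C3) * ((r:ℝ) - 1)
            = (((t:ℝ) - 1) * ((r:ℝ) - 1)) * C3 := by ring
          _ ≤ (δ * m * ((n:ℝ) - 1)) * C3 := mul_le_mul_of_nonneg_right h9 hC3nn
          _ = (δ * m) * (((n:ℝ) - 1) * C3) := by ring
          _ = (δ * m) * (C1 * ((r:ℝ) - 1)) := by rw [hidR]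
          _ = (δ * m * C1) * ((r:ℝ) - 1) := by ring
      exact le_of_mul_le_mul_right h11 hr1
    have hN2R : C1 ≤ C2 + ((t:ℝ) - 1) * C3 := by
      rw [hC1, hC2, hC3]
      have hcast : ((t - 1 : ℕ) : ℝ) = (t:ℝ) - 1 := by
        rw [Nat.cast_sub ht1]; simp
      have h' : (((n-1).choose (r-1) : ℕ) : ℝ)
          ≤ ((((n-t).choose (r-1) + (t-1) * (n-2).choose (r-2)) : ℕ) : ℝ) := by
        exact_mod_cast hN2
      push_cast [hcast] at h'
      linarith
    have hstep2 : (1 - δ * m) * C1 ≤ C2 := by linarith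
    have hN1R : (t:ℝ) * C2 ≤ (n.choose r : ℝ) - ((n-t).choose r : ℝ) := by
      have : (((n-t).choose r + t * (n-t).choose (r-1) : ℕ) : ℝ) ≤ ((n.choose r : ℕ) : ℝ) := by
        exact_mod_cast hN1
      push_cast at this
      linarith
    have hΔnn : (0:ℝ) ≤ (maxDegHG H : ℝ) := Nat.cast_nonneg _
    have hfinal : ((m * t * maxDegHG H : ℕ) : ℝ)
        ≤ (n.choose r : ℝ) - ((n-t).choose r : ℝ) := by
      push_cast
      have s1 : (m:ℝ) * t * (maxDegHG H : ℝ) ≤ (m:ℝ) * t * ((1/m - δ) * C1) := by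
        apply mul_le_mul_of_nonneg_left _ (by positivity)
        · exact hΔ
      have s2 : (m:ℝ) * t * ((1/m - δ) * C1) = (t:ℝ) * ((1 - δ*m) * C1) := by
        field_simp
      have s3 : (t:ℝ) * ((1 - δ*m) * C1) ≤ (t:ℝ) * C2 :=
        mul_le_mul_of_nonneg_left hstep2 (by linarith)
      linarith
    have hmono : (n-t).choose r ≤ n.choose r := Nat.choose_le_choose r (by omega)
    have hfinalN : m * t * maxDegHG H ≤ n.choose r - (n-t).choose r := by
      have : ((m * t * maxDegHG H : ℕ) : ℝ) ≤ (((n.choose r - (n-t).choose r) : ℕ) : ℝ) := by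
        rw [Nat.cast_sub hmono]
        exact hfinal
      exact_mod_cast this
    omega
  · -- corner case: n < (t+1) * m
    push_neg at hcase
    have hhs := handshakeHG H hH
    have hidB : n * (n-1).choose (r-1) = n.choose r * r := by
      have := Nat.add_one_mul_choose_eq (n-1) (r-1)
      have e1 : n - 1 + 1 = n := by omega
      have e2 : r - 1 + 1 = r := by omega
      rw [e1, e2] at this
      exact this
    set Cn : ℝ := (n.choose r : ℝ) with hCn
    set Cnt : ℝ := ((n-t).choose r : ℝ) with hCnt
    have hCnn : (0:ℝ) ≤ Cn := Nat.cast_nonneg _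
    have hidBR : (n:ℝ) * ((n-1).choose (r-1) : ℝ) = Cn * r := by
      rw [hCn]; exact_mod_cast hidB
    have hHbound : (H.card : ℝ) ≤ (1/m - δ) * Cn := by
      have s1 : (r:ℝ) * H.card ≤ (n:ℝ) * (maxDegHG H : ℝ) := by exact_mod_cast hhs
      have s2 : (n:ℝ) * (maxDegHG H : ℝ) ≤ (n:ℝ) * ((1/m - δ) * ((n-1).choose (r-1) : ℝ)) := by
        apply mul_le_mul_of_nonneg_left _ hn0
        exact hΔ
      have s3 : (n:ℝ) * ((1/m - δ) * ((n-1).choose (r-1) : ℝ)) = (1/m - δ) * Cn * r := by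
        calc (n:ℝ) * ((1/m - δ) * ((n-1).choose (r-1) : ℝ))
            = (1/m - δ) * ((n:ℝ) * ((n-1).choose (r-1) : ℝ)) := by ring
          _ = (1/m - δ) * (Cn * r) := by rw [hidBR]
          _ = (1/m - δ) * Cn * r := by ring
      have s4 : (H.card : ℝ) * r ≤ ((1/m - δ) * Cn) * r := by linarith
      exact le_of_mul_le_mul_right s4 (by linarith : (0:ℝ) < (r:ℝ))
    -- cross inequality
    have hcross := chooseRatio' (a := n - t) (n := n) (r := r) (by omega) hr (by omega)
    have hch2n : n * (n - 1) = 2 * n.choose 2 := by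
      have := Nat.add_one_mul_choose_eq (n-1) 1
      have e1 : n - 1 + 1 = n := by omega
      have e2 : 1 + 1 = 2 := rfl
      rw [e1, e2, Nat.choose_one_right] at this
      omega
    have hch2a : (n-t) * (n - t - 1) = 2 * (n-t).choose 2 := by
      have := Nat.add_one_mul_choose_eq (n-t-1) 1
      have e1 : n - t - 1 + 1 = n - t := by omega
      have e2 : 1 + 1 = 2 := rfl
      rw [e1, e2, Nat.choose_one_right] at this
      omega
    have hcrossR : Cnt * ((n:ℝ) * ((n:ℝ)-1)) ≤ Cn * (((n:ℝ)-t) * ((n:ℝ)-t-1)) := by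
      have c1 : ((n * (n-1) : ℕ) : ℝ) = (n:ℝ) * ((n:ℝ)-1) := by
        push_cast [Nat.cast_sub (by omega : 1 ≤ n)]; ring
      have c2 : (((n-t) * (n-t-1) : ℕ) : ℝ) = ((n:ℝ)-t) * ((n:ℝ)-t-1) := by
        push_cast [Nat.cast_sub (by omega : t ≤ n), Nat.cast_sub (by omega : t + 1 ≤ n)]
        rw [Nat.cast_sub (by omega : 1 ≤ n - t), Nat.cast_sub (by omega : t ≤ n)]
        push_cast
        ring
      have h2' : (n-t).choose r * (n * (n-1)) ≤ n.choose r * ((n-t) * (n-t-1)) := by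
        rw [hch2n, hch2a]
        calc (n-t).choose r * (2 * n.choose 2) = 2 * ((n-t).choose r * n.choose 2) := by ring
          _ ≤ 2 * (n.choose r * (n-t).choose 2) := by omega
          _ = n.choose r * (2 * (n-t).choose 2) := by ring
      calc Cnt * ((n:ℝ) * ((n:ℝ)-1)) = (((n-t).choose r * (n * (n-1)) : ℕ) : ℝ) := by
            push_cast [c1]; ring
        _ ≤ ((n.choose r * ((n-t) * (n-t-1)) : ℕ) : ℝ) := by exact_mod_cast h2'
        _ = Cn * (((n:ℝ)-t) * ((n:ℝ)-t-1)) := by push_cast [c2]; ring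
    -- key polynomial inequality
    have hpoly : (m:ℝ) * ((n:ℝ) - t) * ((n:ℝ) - t - 1)
        ≤ ((m:ℝ) - 1 + δ * m) * ((n:ℝ) * ((n:ℝ) - 1)) := by
      have hcaseR : (n:ℝ) + 1 ≤ ((t:ℝ) + 1) * m := by
        have : (n:ℕ) + 1 ≤ (t+1) * m := hcase
        exact_mod_cast by push_cast; exact_mod_cast this
      have h1 : (t:ℝ) + 2 ≤ ((t:ℝ) + r) * ((r:ℝ) - 1) := by nlinarith
      have h2 : ((t:ℝ) + 2) * ((n:ℝ) - 1) ≤ δ * m * ((n:ℝ) * ((n:ℝ)-1)) := by nlinarith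
      have h3 : (0:ℝ) ≤ ((t:ℝ)-1)*((m:ℝ)*((n:ℝ)-(t:ℝ)*(m:ℝ))) :=
        mul_nonneg (by linarith) (mul_nonneg (by linarith) (by linarith))
      have h4 : (0:ℝ) ≤ (n:ℝ)*(((t:ℝ)+1)*(m:ℝ)-1-(n:ℝ)) := mul_nonneg hn0 (by linarith)
      have h5 : (0:ℝ) ≤ ((n:ℝ)-(t:ℝ)*(m:ℝ))*((t:ℝ)+4) := mul_nonneg (by linarith) (by linarith)
      have h6 : (0:ℝ) ≤ ((t:ℝ)-1)*((t:ℝ)*((m:ℝ)*(m:ℝ))) :=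
        mul_nonneg (by linarith) (mul_nonneg (by linarith) (by nlinarith))
      have h7 : (0:ℝ) ≤ (t:ℝ)*((m:ℝ)-2) := mul_nonneg (by linarith) (by linarith)
      nlinarith [h2,h3,h4,h5,h6,h7]
    -- conclude Cnt ≤ (1 - 1/m + δ) Cn
    have hconc : Cnt ≤ (1 - 1/(m:ℝ) + δ) * Cn := by
      have hq : Cnt * ((m:ℝ) * ((n:ℝ) * ((n:ℝ)-1)))
          ≤ ((1 - 1/(m:ℝ) + δ) * Cn) * ((m:ℝ) * ((n:ℝ) * ((n:ℝ)-1))) := by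
        have e1 : ((1 - 1/(m:ℝ) + δ) * Cn) * ((m:ℝ) * ((n:ℝ) * ((n:ℝ)-1)))
            = Cn * (((m:ℝ) - 1 + δ * m) * ((n:ℝ) * ((n:ℝ)-1))) := by
          field_simp
        rw [e1]
        calc Cnt * ((m:ℝ) * ((n:ℝ) * ((n:ℝ)-1)))
            = (m:ℝ) * (Cnt * ((n:ℝ) * ((n:ℝ)-1))) := by ring
          _ ≤ (m:ℝ) * (Cn * (((n:ℝ)-t) * ((n:ℝ)-t-1))) :=
              mul_le_mul_of_nonneg_left hcrossR (by linarith)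
          _ = Cn * ((m:ℝ) * ((n:ℝ)-t) * ((n:ℝ)-t-1)) := by ring
          _ ≤ Cn * (((m:ℝ) - 1 + δ * m) * ((n:ℝ) * ((n:ℝ)-1))) :=
              mul_le_mul_of_nonneg_left hpoly hCnn
      have hpos : (0:ℝ) < (m:ℝ) * ((n:ℝ) * ((n:ℝ)-1)) :=
        mul_pos hm0 (mul_pos (by linarith) (by linarith))
      exact le_of_mul_le_mul_right hq hpos
    have hfinR : (H.card : ℝ) ≤ Cn - Cnt := by
      have : (1/(m:ℝ) - δ) * Cn = Cn - (1 - 1/(m:ℝ) + δ) * Cn := by ring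
      linarith [hHbound, hconc]
    have hmono : (n-t).choose r ≤ n.choose r := Nat.choose_le_choose r (by omega)
    have hfinN : H.card ≤ n.choose r - (n-t).choose r := by
      have : ((H.card : ℕ):ℝ) ≤ (((n.choose r - (n-t).choose r) : ℕ) : ℝ) := by
        rw [Nat.cast_sub hmono]
        exact hfinR
      exact_mod_cast this
    omega
end

section
/- Let n ≥ r ≥ 2 and s_r ≥ ⋯ ≥ s_1 ≥ 1 be integers. Then ex(n, K^r_{s_1,…,s_r}) ≤ ((s_2 + ⋯ + s_r - r + 1)^{1/s_1}/r) · n^{r - 1/(s_1⋯s_{r-1})} + ((s_1 - 1)/r) · C(n, r-1). -/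
open Finset

/-- The complete r-partite r-graph with part sizes `s 0, …, s (r-1)`. -/
def completeMultipartiteHG (r : ℕ) (s : Fin r → ℕ) : Finset (Finset (Σ i, Fin (s i))) :=
  Finset.univ.filter fun e => ∀ i : Fin r, (e.filter fun x => x.1 = i).card = 1

lemma mem_cmhg_iff {r : ℕ} {s : Fin r → ℕ} {e : Finset (Σ i, Fin (s i))} :
    e ∈ completeMultipartiteHG r s ↔ ∀ i : Fin r, (e.filter fun x => x.1 = i).card = 1 := by
  simp [completeMultipartiteHG]

lemma exists_transversal_of_mem {r : ℕ} {s : Fin r → ℕ}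
    {e : Finset (Σ i, Fin (s i))} (he : e ∈ completeMultipartiteHG r s) :
    ∃ a : Fin r → Σ i, Fin (s i), (∀ i, (a i).1 = i) ∧ e = Finset.image a Finset.univ := by
  rw [mem_cmhg_iff] at he
  choose a ha using fun i => Finset.card_eq_one.mp (he i)
  have hfst : ∀ i, (a i).1 = i := by
    intro i
    have : a i ∈ e.filter (fun x => x.1 = i) := by rw [ha i]; exact mem_singleton_self _
    exact (mem_filter.mp this).2
  refine ⟨a, hfst, ?_⟩
  apply Finset.ext
  intro x
  constructor
  · intro hx
    have : x ∈ e.filter (fun y => y.1 = x.1) := mem_filter.mpr ⟨hx, rfl⟩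
    rw [ha x.1, mem_singleton] at this
    exact mem_image.mpr ⟨x.1, mem_univ _, this.symm⟩
  · intro hx
    obtain ⟨i, _, rfl⟩ := mem_image.mp hx
    have : a i ∈ e.filter (fun x => x.1 = i) := by rw [ha i]; exact mem_singleton_self _
    exact (mem_filter.mp this).1

lemma mem_cmhg_of_transversal {r : ℕ} {s : Fin r → ℕ}
    (a : Fin r → Σ i, Fin (s i)) (ha : ∀ i, (a i).1 = i) :
    Finset.image a Finset.univ ∈ completeMultipartiteHG r s := by
  rw [mem_cmhg_iff]
  intro i
  rw [Finset.card_eq_one]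
  refine ⟨a i, ?_⟩
  ext x
  simp only [mem_filter, mem_image, mem_singleton, mem_univ, true_and]
  constructor
  · rintro ⟨⟨j, rfl⟩, h2⟩
    have hji : j = i := by rw [ha j] at h2; exact h2
    subst hji; rfl
  · rintro rfl; exact ⟨⟨i, rfl⟩, ha i⟩

lemma hasCopy_cmhg_iff {β : Type*} [DecidableEq β] {r : ℕ} {s : Fin r → ℕ}
    {H : Finset (Finset β)} :
    HasCopyHG (completeMultipartiteHG r s) H ↔
      ∃ W : Fin r → Finset β, (∀ i, (W i).card = s i) ∧
        (∀ i j, i ≠ j → Disjoint (W i) (W j)) ∧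
        ∀ g : Fin r → β, (∀ i, g i ∈ W i) → Finset.image g Finset.univ ∈ H := by
  constructor
  · rintro ⟨f, hf, hmap⟩
    refine ⟨fun i => Finset.image (fun j : Fin (s i) => f ⟨i, j⟩) Finset.univ, ?_, ?_, ?_⟩
    · intro i
      rw [Finset.card_image_of_injective _ ?_, Finset.card_univ, Fintype.card_fin]
      intro j k hjk
      have := hf hjk
      exact Fin.val_injective (by simpa using congrArg (fun x : (Σ i, Fin (s i)) => (x.2 : ℕ)) this)
    · intro i j hij
      rw [Finset.disjoint_left]
      rintro x hx1 hx2
      obtain ⟨a, -, rfl⟩ := mem_image.mp hx1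
      obtain ⟨b, -, hb⟩ := mem_image.mp hx2
      have := hf hb
      exact hij (congrArg Sigma.fst this).symm
    · intro g hg
      choose jj hjj using fun i => mem_image.mp (hg i)
      have hmem := hmap (Finset.image (fun i => (⟨i, jj i⟩ : Σ i, Fin (s i))) Finset.univ)
        (mem_cmhg_of_transversal _ (fun i => rfl))
      rw [Finset.image_image] at hmem
      convert hmem using 2
      funext i
      exact ((hjj i).2).symm
  · rintro ⟨W, hcard, hdisj, htrans⟩
    have eqv : ∀ i, Fin (s i) ≃ {x // x ∈ W i} :=
      fun i => (finCongr (hcard i)).symm.trans (W i).equivFin.symm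
    refine ⟨fun x => (eqv x.1 x.2 : β), ?_, ?_⟩
    · rintro ⟨i, j⟩ ⟨k, l⟩ h
      dsimp at h
      by_cases hik : i = k
      · subst hik
        have : eqv i j = eqv i l := Subtype.ext h
        have := (eqv i).injective this
        subst this; rfl
      · exfalso
        have hm1 : ((eqv i j : β)) ∈ W i := (eqv i j).2
        have hm2 : ((eqv k l : β)) ∈ W k := (eqv k l).2
        rw [h] at hm1
        exact Finset.disjoint_left.mp (hdisj i k hik) hm1 hm2
    · intro e he
      obtain ⟨a, ha, rfl⟩ := exists_transversal_of_mem he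
      rw [Finset.image_image]
      apply htrans
      intro i
      have h1 : ((eqv (a i).1 (a i).2 : β)) ∈ W (a i).1 := (eqv (a i).1 (a i).2).2
      have h2 : W ((a i).1) = W i := by rw [ha i]
      exact h2 ▸ h1

lemma deg_sum (hr : 1 ≤ r) (H : Finset (Finset (Fin n))) (hu : IsUniformHG r H) :
    ∑ t ∈ Finset.powersetCard (r-1) (univ : Finset (Fin n)),
      (univ.filter (fun v => insert v t ∈ H)).card = r * H.card := by
  have step1 : ∀ t ∈ Finset.powersetCard (r-1) (univ : Finset (Fin n)),
      (univ.filter (fun v => insert v t ∈ H)).card = (H.filter (fun e => t ⊆ e)).card := by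
    intro t ht
    have htc : t.card = r - 1 := (Finset.mem_powersetCard.mp ht).2
    apply Finset.card_bij (fun v _ => insert v t)
    · intro v hv
      rw [mem_filter] at hv ⊢
      exact ⟨hv.2, Finset.subset_insert _ _⟩
    · intro v hv v' hv' h
      rw [mem_filter] at hv hv'
      have hvt : v ∉ t := by
        intro hmem
        have : insert v t = t := Finset.insert_eq_self.mpr hmem
        rw [this] at hv
        have := hu t hv.2
        omega
      have : v ∈ insert v' t := h ▸ Finset.mem_insert_self v t
      rcases Finset.mem_insert.mp this with h' | h'
      · exact h'
      · exact absurd h' hvt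
    · intro e he
      rw [mem_filter] at he
      have hec : e.card = r := hu e he.1
      have hd : (e \ t).card = 1 := by
        rw [Finset.card_sdiff_of_subset he.2]; omega
      obtain ⟨v, hv⟩ := Finset.card_eq_one.mp hd
      have hvm : v ∈ e \ t := hv ▸ Finset.mem_singleton_self v
      rw [Finset.mem_sdiff] at hvm
      refine ⟨v, mem_filter.mpr ⟨mem_univ _, ?_⟩, ?_⟩
      · have : insert v t = e := by
          apply Finset.eq_of_subset_of_card_le
          · exact Finset.insert_subset hvm.1 he.2
          · rw [Finset.card_insert_of_notMem hvm.2]; omega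
        rw [this]; exact he.1
      · apply Finset.eq_of_subset_of_card_le
        · exact Finset.insert_subset hvm.1 he.2
        · rw [Finset.card_insert_of_notMem hvm.2]; omega
  rw [Finset.sum_congr rfl step1]
  have step2 : ∑ t ∈ Finset.powersetCard (r-1) (univ : Finset (Fin n)),
      (H.filter (fun e => t ⊆ e)).card
      = ∑ e ∈ H, ((Finset.powersetCard (r-1) (univ : Finset (Fin n))).filter
          (fun t => t ⊆ e)).card := by
    simp only [Finset.card_filter]
    exact Finset.sum_comm
  rw [step2]
  have step3 : ∀ e ∈ H, ((Finset.powersetCard (r-1) (univ : Finset (Fin n))).filter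
      (fun t => t ⊆ e)).card = r := by
    intro e he
    have : (Finset.powersetCard (r-1) (univ : Finset (Fin n))).filter (fun t => t ⊆ e)
        = Finset.powersetCard (r-1) e := by
      ext t
      simp only [mem_filter, Finset.mem_powersetCard, Finset.subset_univ, true_and]
      tauto
    rw [this, Finset.card_powersetCard, hu e he]
    obtain ⟨m, rfl⟩ : ∃ m, r = m + 1 := ⟨r - 1, by omega⟩
    simp [Nat.choose_succ_self_right]
  rw [Finset.sum_congr rfl step3, Finset.sum_const, smul_eq_mul, mul_comm]

lemma pair_count (H : Finset (Finset (Fin n))) :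
    ∑ t ∈ Finset.powersetCard (r-1) (univ : Finset (Fin n)),
      ((univ.filter (fun v => insert v t ∈ H)).card).choose s0
    = ∑ S ∈ Finset.powersetCard s0 (univ : Finset (Fin n)),
        ((Finset.powersetCard (r-1) (univ : Finset (Fin n))).filter
          (fun t => ∀ v ∈ S, insert v t ∈ H)).card := by
  have per_t : ∀ t : Finset (Fin n),
      ((univ.filter (fun v => insert v t ∈ H)).card).choose s0
      = ((Finset.powersetCard s0 (univ : Finset (Fin n))).filter
          (fun S => ∀ v ∈ S, insert v t ∈ H)).card := by
    intro t
    rw [← Finset.card_powersetCard]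
    congr 1
    ext S
    simp only [Finset.mem_powersetCard, mem_filter, Finset.subset_univ, true_and,
      Finset.subset_iff, mem_filter, mem_univ, true_and]
    tauto
  rw [Finset.sum_congr rfl (fun t _ => per_t t)]
  simp only [Finset.card_filter]
  exact Finset.sum_comm

lemma base_case {n : ℕ} (s : ℕ → ℕ) (hs1 : 1 ≤ s 0)
    (H : Finset (Finset (Fin n))) (hu : IsUniformHG 1 H)
    (hK : ¬ HasCopyHG (completeMultipartiteHG 1 (fun i : Fin 1 => s i.val)) H) :
    H.card ≤ s 0 - 1 := by
  set V := univ.filter (fun v : Fin n => {v} ∈ H) with hV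
  have hHV : H ⊆ Finset.image (fun v => {v}) V := by
    intro e he
    obtain ⟨v, hv⟩ := Finset.card_eq_one.mp (hu e he)
    subst hv
    exact mem_image.mpr ⟨v, mem_filter.mpr ⟨mem_univ _, he⟩, rfl⟩
  have hcard : H.card ≤ V.card := le_trans (Finset.card_le_card hHV) Finset.card_image_le
  by_contra hlt
  have hge : s 0 ≤ V.card := by omega
  obtain ⟨W, hWV, hWcard⟩ := Finset.exists_subset_card_eq hge
  apply hK
  rw [hasCopy_cmhg_iff]
  refine ⟨fun _ => W, fun i => ?_, fun i j hij => absurd (Subsingleton.elim i j) hij,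
    fun g hg => ?_⟩
  · have h0 : (i : ℕ) = 0 := by omega
    rw [hWcard, h0]
  · have himg : Finset.image g Finset.univ = {g 0} := by
      rw [Finset.univ_unique, Finset.image_singleton]
      rfl
    rw [himg]
    exact (mem_filter.mp (hWV (hg 0))).2

lemma cast_sub_le' (a b : ℕ) : (a : ℝ) - (b : ℝ) ≤ ((a - b : ℕ) : ℝ) := by
  rcases le_total b a with h | h
  · rw [Nat.cast_sub h]
  · have h1 : a - b = 0 := by omega
    rw [h1]
    have : (a:ℝ) ≤ (b:ℝ) := by exact_mod_cast h
    simpa using this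

lemma key : ∀ r : ℕ, 1 ≤ r → ∀ (n : ℕ) (s : ℕ → ℕ), r - 1 ≤ n →
    (∀ i j : ℕ, i ≤ j → s i ≤ s j) → (∀ i, 1 ≤ s i) →
    ∀ H : Finset (Finset (Fin n)), IsUniformHG r H →
      ¬ HasCopyHG (completeMultipartiteHG r (fun i : Fin r => s i.val)) H →
    (H.card : ℝ) ≤
      ((∑ i ∈ Finset.range (r-1), (s (i+1) : ℝ)) - (r:ℝ) + 1) ^ ((1:ℝ)/(s 0 : ℝ)) / (r:ℝ)
        * (n:ℝ) ^ ((r:ℝ) - 1 / ∏ i ∈ Finset.range (r-1), (s i : ℝ))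
      + ((s 0 : ℝ) - 1) / (r:ℝ) * (n.choose (r-1) : ℝ) := by
  intro r
  induction r with
  | zero => omega
  | succ k ih =>
    cases k with
    | zero =>
      intro _ n s hn hmono hs1 H hu hK
      have hb := base_case s (hs1 0) H hu hK
      have hb' : (H.card : ℝ) ≤ (s 0 : ℝ) - 1 := by
        have h2 := (Nat.cast_le (α := ℝ)).mpr hb
        have h3 := cast_sub_le' (s 0) 1
        have h4 : ((s 0 - 1 : ℕ) : ℝ) = (s 0 : ℝ) - 1 := by
          rw [Nat.cast_sub (hs1 0)]; norm_num
        rw [h4] at h2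
        exact h2
      have hs0pos : (0:ℝ) < (s 0 : ℝ) := by exact_mod_cast hs1 0
      have hexp : ((1:ℝ)/(s 0 : ℝ)) ≠ 0 := ne_of_gt (by positivity)
      have hbase : ((∑ i ∈ Finset.range (0+1-1), (s (i+1) : ℝ)) - ((0+1 : ℕ):ℝ) + 1) = 0 := by
        norm_num
      rw [hbase, Real.zero_rpow hexp]
      norm_num
      exact hb'
    | succ k =>
      intro _ n s hn hmono hs1 H hu hK
      -- r = k + 2
      set T := Finset.powersetCard (k+1) (univ : Finset (Fin n)) with hT
      -- freeness of the link graphs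
      have hGunif : ∀ S : Finset (Fin n),
          IsUniformHG (k+1) (T.filter (fun t => ∀ v ∈ S, insert v t ∈ H)) := by
        intro S e he
        exact (Finset.mem_powersetCard.mp (Finset.mem_filter.mp he).1).2
      have hfree : ∀ S ∈ Finset.powersetCard (s 0) (univ : Finset (Fin n)),
          ¬ HasCopyHG (completeMultipartiteHG (k+1) (fun i : Fin (k+1) => s (i.val+1)))
            (T.filter (fun t => ∀ v ∈ S, insert v t ∈ H)) := by
        intro S hS hcopy
        obtain ⟨W', hW'card, hW'disj, hW'trans⟩ := hasCopy_cmhg_iff.mp hcopy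
        have hne : ∀ i, (W' i).Nonempty :=
          fun i => Finset.card_pos.mp (by rw [hW'card i]; exact hs1 _)
        choose g0 hg0 using fun i => hne i
        have hdisjS : ∀ i : Fin (k+1), Disjoint S (W' i) := by
          intro i
          rw [Finset.disjoint_right]
          intro w hw hwS
          have hgmem : ∀ j, Function.update g0 i w j ∈ W' j := by
            intro j
            by_cases hji : j = i
            · subst hji; simp [hw]
            · rw [Function.update_of_ne hji]; exact hg0 j
          have htG := hW'trans _ hgmem
          rw [Finset.mem_filter] at htG
          have hwt : w ∈ Finset.image (Function.update g0 i w) Finset.univ :=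
            Finset.mem_image.mpr ⟨i, Finset.mem_univ _, by simp⟩
          have hins := htG.2 w hwS
          rw [Finset.insert_eq_self.mpr hwt] at hins
          have hcardt : (Finset.image (Function.update g0 i w) Finset.univ).card = k+1 :=
            (Finset.mem_powersetCard.mp htG.1).2
          have := hu _ hins
          omega
        apply hK
        rw [hasCopy_cmhg_iff]
        have hScard : S.card = s 0 := (Finset.mem_powersetCard.mp hS).2
        refine ⟨Fin.cases S W', ?_, ?_, ?_⟩
        · intro i
          cases i using Fin.cases with
          | zero => simpa using hScard
          | succ j => simpa using hW'card j
        · intro i j hij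
          cases i using Fin.cases with
          | zero =>
            cases j using Fin.cases with
            | zero => exact absurd rfl hij
            | succ j' => simpa using hdisjS j'
          | succ i' =>
            cases j using Fin.cases with
            | zero => simpa using (hdisjS i').symm
            | succ j' =>
              have hne' : i' ≠ j' := fun h => hij (by rw [h])
              simpa using hW'disj i' j' hne'
        · intro g hg
          have hgt : ∀ j : Fin (k+1), g j.succ ∈ W' j := by
            intro j
            have := hg j.succ
            simpa using this
          have htG := hW'trans (fun j => g j.succ) hgt
          rw [Finset.mem_filter] at htG
          have himg : Finset.image g Finset.univ
              = insert (g 0) (Finset.image (fun j : Fin (k+1) => g j.succ) Finset.univ) := by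
            rw [Fin.univ_succ, Finset.cons_eq_insert, Finset.image_insert, Finset.map_eq_image, Finset.image_image]
            rfl
          rw [himg]
          apply htG.2
          simpa using hg 0
            -- numeric part
      have hs0pos : (0:ℝ) < (s 0 : ℝ) := by exact_mod_cast hs1 0
      have hs0ne : (s 0 : ℝ) ≠ 0 := ne_of_gt hs0pos
      have hn1 : (1:ℝ) ≤ (n:ℝ) := by exact_mod_cast (show 1 ≤ n by omega)
      have hnn : (0:ℝ) ≤ (n:ℝ) := by positivity
      set P' : ℝ := ∏ i ∈ Finset.range k, (s (i+1) : ℝ) with hP'def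
      have hP'1 : (1:ℝ) ≤ P' := by
        rw [hP'def, ← Nat.cast_prod]
        have : 1 ≤ ∏ i ∈ Finset.range k, s (i+1) := Finset.one_le_prod' (fun i _ => hs1 (i+1))
        exact_mod_cast this
      have hP'pos : (0:ℝ) < P' := lt_of_lt_of_le one_pos hP'1
      set θ : ℝ := ((k+1:ℕ):ℝ) - 1/P' with hθdef
      set creal : ℝ := (∑ i ∈ Finset.range (k+1), (s (i+1):ℝ)) - ((k+1+1:ℕ):ℝ) + 1 with hcdef
      have hsum1 : (k+1 : ℕ) ≤ ∑ i ∈ Finset.range (k+1), s (i+1) := by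
        calc (k+1 : ℕ) = ∑ _i ∈ Finset.range (k+1), 1 := by simp
        _ ≤ _ := Finset.sum_le_sum (fun i _ => hs1 (i+1))
      have hsum2 : (k : ℕ) ≤ ∑ i ∈ Finset.range k, s (i+1+1) := by
        calc (k : ℕ) = ∑ _i ∈ Finset.range k, 1 := by simp
        _ ≤ _ := Finset.sum_le_sum (fun i _ => hs1 (i+1+1))
      have hcnat : creal = ((∑ i ∈ Finset.range (k+1), s (i+1)) - (k+1) : ℕ) := by
        rw [hcdef, Nat.cast_sub hsum1]
        push_cast
        ring
      have hc0 : (0:ℝ) ≤ creal := by rw [hcnat]; positivity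
      have hc'0 : (0:ℝ) ≤ (∑ i ∈ Finset.range k, (s (i+1+1):ℝ)) - ((k+1:ℕ):ℝ) + 1 := by
        have : ((∑ i ∈ Finset.range k, (s (i+1+1):ℝ)) - ((k+1:ℕ):ℝ) + 1)
            = ((∑ i ∈ Finset.range k, s (i+1+1)) - k : ℕ) := by
          rw [Nat.cast_sub hsum2]
          push_cast
          ring
        rw [this]; positivity
      have hcc' : ((∑ i ∈ Finset.range k, (s (i+1+1):ℝ)) - ((k+1:ℕ):ℝ) + 1) + ((s (0+1) : ℝ) - 1)
          = creal := by
        rw [hcdef, Finset.sum_range_succ' (fun i => (s (i+1) : ℝ)) k]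
        push_cast
        ring
      -- get the per-S bound from the induction hypothesis
      have hB0 := ih (by omega) n (fun i => s (i+1)) (by omega)
        (fun i j hij => hmono _ _ (by omega)) (fun i => hs1 _)
      simp only [Nat.add_sub_cancel] at hB0
      obtain ⟨B, hB, hBnn, hBle⟩ : ∃ B : ℝ,
          (∀ S ∈ Finset.powersetCard (s 0) (univ : Finset (Fin n)),
            ((T.filter (fun t => ∀ v ∈ S, insert v t ∈ H)).card : ℝ) ≤ B)
          ∧ 0 ≤ B ∧ B ≤ creal * (n:ℝ) ^ θ := by
        refine ⟨_, fun S hS => hB0 _ (hGunif S) (hfree S hS), ?_, ?_⟩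
        · apply add_nonneg
          · apply mul_nonneg
            · exact div_nonneg (Real.rpow_nonneg hc'0 _) (by positivity)
            · exact Real.rpow_nonneg hnn _
          · apply mul_nonneg _ (by positivity)
            apply div_nonneg _ (by positivity)
            have : (1:ℝ) ≤ (s (0+1) : ℝ) := by exact_mod_cast hs1 (0+1)
            linarith
        · -- B ≤ creal * n ^ θ
          have hK1pos : (0:ℝ) < ((k+1:ℕ):ℝ) := by positivity
          have hK1 : (1:ℝ) ≤ ((k+1:ℕ):ℝ) := by exact_mod_cast Nat.succ_le_succ (Nat.zero_le k)
          have hXnn : (0:ℝ) ≤ (n:ℝ) ^ θ := Real.rpow_nonneg hnn _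
          have hs1R : (1:ℝ) ≤ (s (0+1) : ℝ) := by exact_mod_cast hs1 (0+1)
          have hspos : (0:ℝ) < (s (0+1) : ℝ) := lt_of_lt_of_le one_pos hs1R
          have lem1 : ((∑ i ∈ Finset.range k, (s (i+1+1):ℝ)) - ((k+1:ℕ):ℝ) + 1)
                ^ ((1:ℝ)/(s (0+1) : ℝ))
              ≤ (∑ i ∈ Finset.range k, (s (i+1+1):ℝ)) - ((k+1:ℕ):ℝ) + 1 := by
            have hnatA : ((∑ i ∈ Finset.range k, (s (i+1+1):ℝ)) - ((k+1:ℕ):ℝ) + 1)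
                = (((∑ i ∈ Finset.range k, s (i+1+1)) - k : ℕ) : ℝ) := by
              rw [Nat.cast_sub hsum2]; push_cast; ring
            rw [hnatA]
            rcases Nat.eq_zero_or_pos ((∑ i ∈ Finset.range k, s (i+1+1)) - k) with h0 | h1
            · rw [h0, Nat.cast_zero, Real.zero_rpow (ne_of_gt (div_pos one_pos hspos))]
            · have h1' : (1:ℝ) ≤ (((∑ i ∈ Finset.range k, s (i+1+1)) - k : ℕ) : ℝ) := by
                exact_mod_cast h1
              have hexple : (1:ℝ)/(s (0+1) : ℝ) ≤ 1 := by
                rw [div_le_one hspos]; exact hs1R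
              have := Real.rpow_le_rpow_of_exponent_le h1' hexple
              rwa [Real.rpow_one] at this
          have lem2 : (n.choose k : ℝ) ≤ ((k+1:ℕ):ℝ) * (n:ℝ) ^ θ := by
            have h1 : (n.choose k : ℝ) ≤ ((n ^ k : ℕ) : ℝ) := by
              exact_mod_cast Nat.choose_le_pow n k
            have h2 : ((n ^ k : ℕ) : ℝ) = (n:ℝ) ^ ((k:ℕ):ℝ) := by
              push_cast
              rw [Real.rpow_natCast]
            have h3 : (n:ℝ) ^ ((k:ℕ):ℝ) ≤ (n:ℝ) ^ θ := by
              apply Real.rpow_le_rpow_of_exponent_le hn1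
              rw [hθdef]
              have : 1/P' ≤ 1 := by rw [div_le_one hP'pos]; exact hP'1
              push_cast
              linarith
            calc (n.choose k : ℝ) ≤ (n:ℝ) ^ θ := by rw [← h2] at h3; exact h1.trans h3
            _ ≤ ((k+1:ℕ):ℝ) * (n:ℝ) ^ θ := le_mul_of_one_le_left hXnn hK1
          have h1 : ((∑ i ∈ Finset.range k, (s (i+1+1):ℝ)) - ((k+1:ℕ):ℝ) + 1)
                ^ ((1:ℝ)/(s (0+1) : ℝ)) / ((k+1:ℕ):ℝ) * (n:ℝ) ^ θ
              ≤ ((∑ i ∈ Finset.range k, (s (i+1+1):ℝ)) - ((k+1:ℕ):ℝ) + 1) * (n:ℝ) ^ θ := by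
            apply mul_le_mul_of_nonneg_right _ hXnn
            exact (div_le_self (Real.rpow_nonneg hc'0 _) hK1).trans lem1
          have h2 : ((s (0+1) : ℝ) - 1) / ((k+1:ℕ):ℝ) * (n.choose k : ℝ)
              ≤ ((s (0+1) : ℝ) - 1) * (n:ℝ) ^ θ := by
            rw [div_mul_eq_mul_div, div_le_iff₀ hK1pos]
            calc ((s (0+1) : ℝ) - 1) * (n.choose k : ℝ)
                ≤ ((s (0+1) : ℝ) - 1) * (((k+1:ℕ):ℝ) * (n:ℝ) ^ θ) := by
                  apply mul_le_mul_of_nonneg_left lem2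
                  linarith
            _ = ((s (0+1) : ℝ) - 1) * (n:ℝ) ^ θ * ((k+1:ℕ):ℝ) := by ring
          calc _ ≤ ((∑ i ∈ Finset.range k, (s (i+1+1):ℝ)) - ((k+1:ℕ):ℝ) + 1) * (n:ℝ) ^ θ
              + ((s (0+1) : ℝ) - 1) * (n:ℝ) ^ θ := add_le_add h1 h2
          _ = creal * (n:ℝ) ^ θ := by rw [← hcc']; ring
            -- counting
      have hTcard : T.card = n.choose (k+1) := by
        rw [hT, Finset.card_powersetCard, Finset.card_univ, Fintype.card_fin]
      have hNpos : 0 < n.choose (k+1) := Nat.choose_pos (by omega)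
      have hdeg : ∑ t ∈ T, (univ.filter (fun v => insert v t ∈ H)).card = (k+2) * H.card :=
        deg_sum (r := k+2) (by omega) H hu
      have hpairs : ∑ t ∈ T, ((univ.filter (fun v => insert v t ∈ H)).card).choose (s 0)
          = ∑ S ∈ Finset.powersetCard (s 0) (univ : Finset (Fin n)),
              (T.filter (fun t => ∀ v ∈ S, insert v t ∈ H)).card :=
        pair_count (r := k+2) (s0 := s 0) H
      have hcardS : (Finset.powersetCard (s 0) (univ : Finset (Fin n))).card = n.choose (s 0) := by
        rw [Finset.card_powersetCard, Finset.card_univ, Fintype.card_fin]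
      have hsum_low : ∑ t ∈ T, ((univ.filter (fun v => insert v t ∈ H)).card + 1 - s 0)^(s 0)
          ≤ (s 0).factorial * ∑ t ∈ T, ((univ.filter (fun v => insert v t ∈ H)).card).choose (s 0) := by
        rw [Finset.mul_sum]
        apply Finset.sum_le_sum
        intro t _
        calc ((univ.filter (fun v => insert v t ∈ H)).card + 1 - s 0)^(s 0)
            ≤ ((univ.filter (fun v => insert v t ∈ H)).card).descFactorial (s 0) :=
              Nat.pow_sub_le_descFactorial _ _
        _ = _ := Nat.descFactorial_eq_factorial_mul_choose _ _
      have hns0 : (s 0).factorial * (n.choose (s 0)) ≤ n ^ (s 0) := by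
        rw [← Nat.descFactorial_eq_factorial_mul_choose]
        exact Nat.descFactorial_le_pow _ _
      have hup2 : ∑ t ∈ T, ((((univ.filter (fun v => insert v t ∈ H)).card + 1 - s 0:ℕ):ℝ))^(s 0)
          ≤ (n:ℝ)^(s 0) * B := by
        have e1 : ∑ t ∈ T, ((((univ.filter (fun v => insert v t ∈ H)).card + 1 - s 0:ℕ):ℝ))^(s 0)
            = ((∑ t ∈ T, ((univ.filter (fun v => insert v t ∈ H)).card + 1 - s 0)^(s 0) : ℕ) : ℝ) := by
          push_cast
          rfl
        rw [e1]
        have e2 : ((∑ t ∈ T, ((univ.filter (fun v => insert v t ∈ H)).card).choose (s 0) : ℕ) : ℝ)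
            ≤ (n.choose (s 0) : ℝ) * B := by
          rw [hpairs]
          push_cast
          calc ∑ S ∈ Finset.powersetCard (s 0) (univ : Finset (Fin n)),
                ((T.filter (fun t => ∀ v ∈ S, insert v t ∈ H)).card : ℝ)
              ≤ ∑ _S ∈ Finset.powersetCard (s 0) (univ : Finset (Fin n)), B :=
                Finset.sum_le_sum hB
          _ = (n.choose (s 0) : ℝ) * B := by
                rw [Finset.sum_const, hcardS, nsmul_eq_mul]
        calc ((∑ t ∈ T, ((univ.filter (fun v => insert v t ∈ H)).card + 1 - s 0)^(s 0) : ℕ) : ℝ)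
            ≤ (((s 0).factorial * ∑ t ∈ T, ((univ.filter (fun v => insert v t ∈ H)).card).choose (s 0) : ℕ) : ℝ) := by
              exact_mod_cast hsum_low
        _ = ((s 0).factorial : ℝ) * ((∑ t ∈ T, ((univ.filter (fun v => insert v t ∈ H)).card).choose (s 0) : ℕ) : ℝ) := by
              push_cast; ring
        _ ≤ ((s 0).factorial : ℝ) * ((n.choose (s 0) : ℝ) * B) := by
              apply mul_le_mul_of_nonneg_left e2 (by positivity)
        _ = (((s 0).factorial * n.choose (s 0) : ℕ) : ℝ) * B := by push_cast; ring
        _ ≤ (n:ℝ)^(s 0) * B := by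
              apply mul_le_mul_of_nonneg_right _ hBnn
              calc (((s 0).factorial * n.choose (s 0) : ℕ) : ℝ) ≤ ((n ^ (s 0) : ℕ) : ℝ) := by
                    exact_mod_cast hns0
              _ = (n:ℝ)^(s 0) := by push_cast; ring
      -- sum of truncated degrees
      have hSX : ((k:ℝ)+2) * H.card - ((s 0:ℝ) - 1) * (n.choose (k+1):ℝ)
          ≤ ∑ t ∈ T, (((univ.filter (fun v => insert v t ∈ H)).card + 1 - s 0 : ℕ) : ℝ) := by
        have h1 : ∀ t ∈ T, ((univ.filter (fun v => insert v t ∈ H)).card : ℝ) - ((s 0:ℝ) - 1)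
            ≤ (((univ.filter (fun v => insert v t ∈ H)).card + 1 - s 0 : ℕ) : ℝ) := by
          intro t _
          have h2 := cast_sub_le' ((univ.filter (fun v => insert v t ∈ H)).card + 1) (s 0)
          push_cast at h2 ⊢
          linarith
        calc ((k:ℝ)+2) * H.card - ((s 0:ℝ) - 1) * (n.choose (k+1):ℝ)
            = ∑ t ∈ T, (((univ.filter (fun v => insert v t ∈ H)).card : ℝ) - ((s 0:ℝ)-1)) := by
              rw [Finset.sum_sub_distrib, Finset.sum_const, ← Nat.cast_sum, hdeg, hTcard]
              push_cast
              ring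
        _ ≤ _ := Finset.sum_le_sum h1
      -- power mean
      obtain ⟨σ, hσ⟩ : ∃ σ, s 0 = σ + 1 := ⟨s 0 - 1, by have := hs1 0; omega⟩
      have hpm := pow_sum_div_card_le_sum_pow (s := T)
        (f := fun t => (((univ.filter (fun v => insert v t ∈ H)).card + 1 - s 0 : ℕ) : ℝ))
        (fun t _ => by positivity) σ
      -- final goal reduction
      simp only [Nat.add_sub_cancel]
      have hK2pos : (0:ℝ) < ((k+1+1:ℕ):ℝ) := by positivity
      have hK2 : ((k+1+1:ℕ):ℝ) = (k:ℝ)+2 := by push_cast; ring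
      rw [div_mul_eq_mul_div, div_mul_eq_mul_div, ← add_div, le_div_iff₀ hK2pos]
      have hgoal : ((k:ℝ)+2) * H.card - ((s 0:ℝ) - 1) * (n.choose (k+1):ℝ)
          ≤ creal ^ ((1:ℝ)/(s 0 : ℝ)) *
            (n:ℝ) ^ (((k+1+1:ℕ):ℝ) - 1 / ∏ i ∈ Finset.range (k+1), (s i : ℝ)) := by
        set E : ℝ := ((k+1+1:ℕ):ℝ) - 1 / ∏ i ∈ Finset.range (k+1), (s i : ℝ) with hEdef
        have hrpnn : (0:ℝ) ≤ creal ^ ((1:ℝ)/(s 0 : ℝ)) * (n:ℝ) ^ E :=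
          mul_nonneg (Real.rpow_nonneg hc0 _) (Real.rpow_nonneg hnn _)
        rcases le_or_gt (((k:ℝ)+2) * H.card - ((s 0:ℝ) - 1) * (n.choose (k+1):ℝ)) 0 with hY | hY
        · linarith
        · -- positive case
          set Y : ℝ := ((k:ℝ)+2) * H.card - ((s 0:ℝ) - 1) * (n.choose (k+1):ℝ) with hYdef
          have hSXnn : (0:ℝ) ≤ ∑ t ∈ T,
              (((univ.filter (fun v => insert v t ∈ H)).card + 1 - s 0 : ℕ) : ℝ) := by
            apply Finset.sum_nonneg
            intro t _
            positivity
          have hTc : (T.card : ℝ) = (n.choose (k+1) : ℝ) := by exact_mod_cast hTcard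
          have hNR1 : (1:ℝ) ≤ (n.choose (k+1) : ℝ) := by exact_mod_cast hNpos
          have hstep1 : Y ^ (s 0) ≤ (∑ t ∈ T,
              (((univ.filter (fun v => insert v t ∈ H)).card + 1 - s 0 : ℕ) : ℝ)) ^ (s 0) :=
            pow_le_pow_left₀ (le_of_lt hY) hSX _
          have hstep2 : (∑ t ∈ T,
              (((univ.filter (fun v => insert v t ∈ H)).card + 1 - s 0 : ℕ) : ℝ)) ^ (s 0)
              ≤ (n.choose (k+1) : ℝ) ^ σ * ((n:ℝ)^(s 0) * B) := by
            have h3 : (0:ℝ) < ((T.card : ℝ)) ^ σ := by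
              rw [hTc]; positivity
            have h4 := (div_le_iff₀ h3).mp hpm
            rw [hσ]
            rw [hσ] at h4 hup2
            calc (∑ t ∈ T, (((univ.filter (fun v => insert v t ∈ H)).card + 1 - (σ+1) : ℕ) : ℝ)) ^ (σ+1)
                ≤ (∑ t ∈ T, (((univ.filter (fun v => insert v t ∈ H)).card + 1 - (σ+1) : ℕ) : ℝ) ^ (σ+1)) * (T.card:ℝ)^σ := h4
            _ ≤ ((n:ℝ)^(σ+1) * B) * (n.choose (k+1) : ℝ)^σ := by
                  rw [hTc]
                  apply mul_le_mul_of_nonneg_right hup2 (by positivity)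
            _ = (n.choose (k+1) : ℝ) ^ σ * ((n:ℝ)^(σ+1) * B) := by ring
          have hstep3 : (n.choose (k+1) : ℝ) ^ σ * ((n:ℝ)^(s 0) * B)
              ≤ creal * (n:ℝ) ^ ((((k+1)*σ + s 0 : ℕ):ℝ) + θ) := by
            have hc1 : (n.choose (k+1) : ℝ) ≤ (n:ℝ) ^ (k+1) := by
              calc (n.choose (k+1) : ℝ) ≤ ((n ^ (k+1) : ℕ) : ℝ) := by
                    exact_mod_cast Nat.choose_le_pow n (k+1)
              _ = (n:ℝ) ^ (k+1) := by push_cast; ring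
            have hc2 : (n.choose (k+1) : ℝ) ^ σ ≤ ((n:ℝ) ^ (k+1)) ^ σ :=
              pow_le_pow_left₀ (by positivity) hc1 _
            calc (n.choose (k+1) : ℝ) ^ σ * ((n:ℝ)^(s 0) * B)
                ≤ ((n:ℝ) ^ (k+1)) ^ σ * ((n:ℝ)^(s 0) * (creal * (n:ℝ)^θ)) := by
                  apply mul_le_mul hc2
                  · apply mul_le_mul_of_nonneg_left hBle (by positivity)
                  · positivity
                  · positivity
            _ = creal * ((n:ℝ) ^ ((k+1)*σ + s 0) * (n:ℝ)^θ) := by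
                  rw [← pow_mul, pow_add]
                  ring
            _ = creal * (n:ℝ) ^ ((((k+1)*σ + s 0 : ℕ):ℝ) + θ) := by
                  rw [Real.rpow_add (by linarith : (0:ℝ) < (n:ℝ)), Real.rpow_natCast]
          have hYpow : Y ^ (s 0) ≤ creal * (n:ℝ) ^ ((((k+1)*σ + s 0 : ℕ):ℝ) + θ) :=
            le_trans hstep1 (le_trans hstep2 hstep3)
          have hEexp : ((((k+1)*σ + s 0 : ℕ):ℝ) + θ) * ((1:ℝ)/(s 0 : ℝ)) = E := by
            have hPfull : ∏ i ∈ Finset.range (k+1), (s i : ℝ) = P' * (s 0 : ℝ) := by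
              rw [Finset.prod_range_succ' (fun i => (s i : ℝ)) k]
            rw [hEdef, hPfull, hθdef, hσ]
            have hs0R : ((σ+1:ℕ):ℝ) = (σ:ℝ) + 1 := by push_cast; ring
            push_cast
            field_simp
            ring
          have hfin : Y ≤ creal ^ ((1:ℝ)/(s 0 : ℝ)) * (n:ℝ) ^ E := by
            have h5 : Y = (Y ^ (s 0)) ^ ((1:ℝ)/(s 0 : ℝ)) := by
              rw [← Real.rpow_natCast Y (s 0), ← Real.rpow_mul (le_of_lt hY),
                mul_one_div, div_self hs0ne, Real.rpow_one]
            rw [h5]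
            calc (Y ^ (s 0)) ^ ((1:ℝ)/(s 0 : ℝ))
                ≤ (creal * (n:ℝ) ^ ((((k+1)*σ + s 0 : ℕ):ℝ) + θ)) ^ ((1:ℝ)/(s 0 : ℝ)) := by
                  apply Real.rpow_le_rpow (by positivity) hYpow (by positivity)
            _ = creal ^ ((1:ℝ)/(s 0 : ℝ)) *
                ((n:ℝ) ^ ((((k+1)*σ + s 0 : ℕ):ℝ) + θ)) ^ ((1:ℝ)/(s 0 : ℝ)) := by
                  rw [Real.mul_rpow hc0 (Real.rpow_nonneg hnn _)]
            _ = creal ^ ((1:ℝ)/(s 0 : ℝ)) * (n:ℝ) ^ E := by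
                  rw [← Real.rpow_mul hnn, hEexp]
          exact hfin
      rw [← hcdef]
      rw [hK2] at hgoal ⊢
      linarith [hgoal]

lemma hasCopy_congr {β : Type*} [DecidableEq β] {r : ℕ} {s1 s2 : Fin r → ℕ} (h : s1 = s2)
    (H : Finset (Finset β)) :
    HasCopyHG (completeMultipartiteHG r s1) H ↔ HasCopyHG (completeMultipartiteHG r s2) H := by
  subst h; rfl

theorem stmt_12 (n r : ℕ) (hr : 2 ≤ r) (hrn : r ≤ n)
    (s : Fin r → ℕ) (hmono : ∀ i j : Fin r, i ≤ j → s i ≤ s j) (hs : ∀ i, 1 ≤ s i) :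
    (exHG n r (completeMultipartiteHG r s) : ℝ) ≤
      ((∑ i ∈ Finset.univ.erase (⟨0, by omega⟩ : Fin r), (s i : ℝ)) - r + 1) ^
          ((1 : ℝ) / (s ⟨0, by omega⟩ : ℝ)) / r *
        (n : ℝ) ^ ((r : ℝ) - 1 / ∏ i ∈ Finset.univ.erase (⟨r - 1, by omega⟩ : Fin r), (s i : ℝ)) +
      ((s ⟨0, by omega⟩ : ℝ) - 1) / r * (n.choose (r - 1) : ℝ) := by
  obtain ⟨k, rfl⟩ : ∃ k, r = k + 2 := ⟨r - 2, by omega⟩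
  set t : ℕ → ℕ := fun i => s ⟨min i (k+1), by omega⟩ with ht
  have hts : (fun i : Fin (k+2) => t i.val) = s := by
    funext i
    have hmk : (⟨min i.val (k+1), by omega⟩ : Fin (k+2)) = i := by
      apply Fin.ext
      have := i.isLt
      simp only
      omega
    show s ⟨min i.val (k+1), by omega⟩ = s i
    rw [hmk]
  have htmono : ∀ i j : ℕ, i ≤ j → t i ≤ t j := by
    intro i j hij
    apply hmono
    rw [Fin.mk_le_mk]
    omega
  have hts1 : ∀ i, 1 ≤ t i := fun i => hs _
  -- extract an extremal H
  have hne : {m | ∃ H : Finset (Finset (Fin n)), IsUniformHG (k+2) H ∧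
      ¬ HasCopyHG (completeMultipartiteHG (k+2) s) H ∧ H.card = m}.Nonempty := by
    refine ⟨0, ∅, fun e he => absurd he (Finset.notMem_empty e), ?_, rfl⟩
    rintro ⟨f, -, hmap⟩
    exact absurd
      (hmap _ (mem_cmhg_of_transversal (fun i => ⟨i, ⟨0, hs i⟩⟩) (fun i => rfl)))
      (Finset.notMem_empty _)
  have hbdd : BddAbove {m | ∃ H : Finset (Finset (Fin n)), IsUniformHG (k+2) H ∧
      ¬ HasCopyHG (completeMultipartiteHG (k+2) s) H ∧ H.card = m} := by
    refine ⟨Fintype.card (Finset (Fin n)), ?_⟩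
    rintro m ⟨H, -, -, rfl⟩
    exact Finset.card_le_univ H
  obtain ⟨H, huH, hKH, hcard⟩ := Nat.sSup_mem hne hbdd
  have hK' : ¬ HasCopyHG (completeMultipartiteHG (k+2) (fun i : Fin (k+2) => t i.val)) H :=
    (not_congr (hasCopy_congr hts H)).mpr hKH
  have hbound := key (k+2) (by omega) n t (by omega) htmono hts1 H huH hK'
  rw [show k+2-1 = k+1 from rfl] at hbound
  -- translate sums and products
  have hsum_univ : ∑ i ∈ (Finset.univ : Finset (Fin (k+2))).erase ⟨0, by omega⟩, (s i : ℝ)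
      = ∑ i ∈ Finset.range (k+1), (t (i+1) : ℝ) := by
    have h0 : (∑ i ∈ (Finset.univ : Finset (Fin (k+2))).erase ⟨0, by omega⟩, (s i : ℝ))
        + (s (⟨0, by omega⟩ : Fin (k+2)) : ℝ) = ∑ i : Fin (k+2), (s i : ℝ) :=
      Finset.sum_erase_add Finset.univ _ (mem_univ _)
    have h1 : ∑ i : Fin (k+2), (s i : ℝ) = ∑ i ∈ Finset.range (k+2), (t i : ℝ) := by
      rw [← hts]
      exact Fin.sum_univ_eq_sum_range (fun i => (t i : ℝ)) (k+2)
    have h2 : ∑ i ∈ Finset.range (k+2), (t i : ℝ)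
        = (∑ i ∈ Finset.range (k+1), (t (i+1) : ℝ)) + (t 0 : ℝ) :=
      Finset.sum_range_succ' _ _
    have h3 : (s (⟨0, by omega⟩ : Fin (k+2)) : ℝ) = (t 0 : ℝ) := by
      rw [← hts]
    rw [h1, h2] at h0
    rw [h3] at h0
    linarith
  have hprod_univ : ∏ i ∈ (Finset.univ : Finset (Fin (k+2))).erase ⟨k+2-1, by omega⟩, (s i : ℝ)
      = ∏ i ∈ Finset.range (k+1), (t i : ℝ) := by
    have h0 : (∏ i ∈ (Finset.univ : Finset (Fin (k+2))).erase ⟨k+2-1, by omega⟩, (s i : ℝ))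
        * (s (⟨k+2-1, by omega⟩ : Fin (k+2)) : ℝ) = ∏ i : Fin (k+2), (s i : ℝ) :=
      Finset.prod_erase_mul Finset.univ _ (mem_univ _)
    have h1 : ∏ i : Fin (k+2), (s i : ℝ) = ∏ i ∈ Finset.range (k+2), (t i : ℝ) := by
      rw [← hts]
      exact Fin.prod_univ_eq_prod_range (fun i => (t i : ℝ)) (k+2)
    have h2 : ∏ i ∈ Finset.range (k+2), (t i : ℝ)
        = (∏ i ∈ Finset.range (k+1), (t i : ℝ)) * (t (k+1) : ℝ) :=
      Finset.prod_range_succ _ _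
    have h3 : (s (⟨k+2-1, by omega⟩ : Fin (k+2)) : ℝ) = (t (k+1) : ℝ) := by
      rw [← hts]
      rfl
    rw [h1, h2] at h0
    rw [h3] at h0
    have htne : (t (k+1) : ℝ) ≠ 0 := by
      have := hts1 (k+1)
      positivity
    exact mul_right_cancel₀ htne h0
  have h3' : (s (⟨0, by omega⟩ : Fin (k+2)) : ℝ) = (t 0 : ℝ) := by
    rw [← hts]
  have hchoose : n.choose (k+2-1) = n.choose (k+1) := rfl
  have hHeq : (H.card : ℝ) = (exHG n (k+2) (completeMultipartiteHG (k+2) s) : ℝ) := by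
    rw [hcard]
    rfl
  rw [← hHeq, hsum_univ, hprod_univ, h3', hchoose]
  convert hbound using 3
end

section
/- Let r ≥ 3, s_r ≥ ⋯ ≥ s_1 ≥ 1, and m, n ≥ 1 be integers. Then Z(m, n, s_1, …, s_r) ≤ ((s_2 + ⋯ + s_r - r + 1)^{1/s_1}/(r-1)) · m · n^{r-1-1/(s_1⋯s_{r-1})} + (s_1 - 1)·C(n, r-1). -/
open Finset

/-- A semibipartite r-graph on `Fin m ⊕ Fin n`: every edge has `r` vertices,
exactly one of which lies in the left part. -/
def IsSemibipHG {m n : ℕ} (r : ℕ) (H : Finset (Finset (Fin m ⊕ Fin n))) : Prop :=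
  ∀ e ∈ H, e.card = r ∧ (e.filter fun x => x.isLeft = true).card = 1

/-- `H` contains an ordered copy of the complete r-partite r-graph with part sizes `s`:
the part indexed by `i0` lies in the left side, all other parts in the right side. -/
def HasOrderedCopyHG {m n r : ℕ} (s : Fin r → ℕ) (i0 : Fin r)
    (H : Finset (Finset (Fin m ⊕ Fin n))) : Prop :=
  ∃ f : (Σ i, Fin (s i)) → Fin m ⊕ Fin n,
    Function.Injective f ∧ (∀ e ∈ completeMultipartiteHG r s, e.image f ∈ H) ∧
    ∀ x : Σ i, Fin (s i), ((f x).isLeft = true ↔ x.1 = i0)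

/-- `H` contains `k` pairwise vertex-disjoint ordered copies of the complete
r-partite r-graph with part sizes `s`. -/
def HasDisjOrderedCopiesHG {m n r : ℕ} (s : Fin r → ℕ) (i0 : Fin r)
    (H : Finset (Finset (Fin m ⊕ Fin n))) (k : ℕ) : Prop :=
  ∃ f : Fin k → (Σ i, Fin (s i)) → Fin m ⊕ Fin n,
    (∀ j, Function.Injective (f j) ∧ (∀ e ∈ completeMultipartiteHG r s, e.image (f j) ∈ H) ∧
      ∀ x : Σ i, Fin (s i), ((f j x).isLeft = true ↔ x.1 = i0)) ∧
    ∀ j j', j ≠ j' → ∀ a b, f j a ≠ f j' b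

/-- The Zarankiewicz number `Z(m, n, s_1, …, s_r)`. -/
noncomputable def ZarankiewiczHG (m n r : ℕ) (s : Fin r → ℕ) (i0 : Fin r) : ℕ :=
  sSup {k | ∃ H : Finset (Finset (Fin m ⊕ Fin n)),
    IsSemibipHG r H ∧ ¬ HasOrderedCopyHG s i0 H ∧ H.card = k}

namespace ZProof
open Finset

/-- The edge consisting of a left vertex `v` and right set `T`. -/
def edgeOf {m n : ℕ} (v : Fin m) (T : Finset (Fin n)) : Finset (Fin m ⊕ Fin n) :=
  insert (Sum.inl v) (T.image Sum.inr)

lemma mem_edgeOf {m n : ℕ} {v : Fin m} {T : Finset (Fin n)} {x : Fin m ⊕ Fin n} :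
    x ∈ edgeOf v T ↔ x = Sum.inl v ∨ ∃ w ∈ T, x = Sum.inr w := by
  simp [edgeOf, eq_comm]

lemma inl_mem_edgeOf {m n : ℕ} {v w : Fin m} {T : Finset (Fin n)} :
    Sum.inl w ∈ edgeOf v T ↔ w = v := by
  simp [mem_edgeOf]

lemma inr_mem_edgeOf {m n : ℕ} {v : Fin m} {w : Fin n} {T : Finset (Fin n)} :
    Sum.inr w ∈ edgeOf v T ↔ w ∈ T := by
  simp [mem_edgeOf]

lemma card_edgeOf {m n : ℕ} (v : Fin m) (T : Finset (Fin n)) :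
    (edgeOf v T).card = T.card + 1 := by
  rw [edgeOf, card_insert_of_notMem (by simp), card_image_of_injective _ Sum.inr_injective]

lemma edgeOf_inj {m n : ℕ} {v v' : Fin m} {T T' : Finset (Fin n)}
    (h : edgeOf v T = edgeOf v' T') : v = v' ∧ T = T' := by
  constructor
  · have : Sum.inl v ∈ edgeOf v' T' := h ▸ (by simp [mem_edgeOf] : Sum.inl v ∈ edgeOf v T)
    exact (inl_mem_edgeOf.mp this)
  · ext w
    constructor
    · intro hw
      have : Sum.inr w ∈ edgeOf v' T' := h ▸ inr_mem_edgeOf.mpr hw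
      exact inr_mem_edgeOf.mp this
    · intro hw
      have : Sum.inr w ∈ edgeOf v T := h ▸ inr_mem_edgeOf.mpr hw
      exact inr_mem_edgeOf.mp this

lemma filter_isLeft_edgeOf {m n : ℕ} (v : Fin m) (T : Finset (Fin n)) :
    (edgeOf v T).filter (fun x => x.isLeft = true) = {Sum.inl v} := by
  ext x
  rcases x with w | w <;> simp [mem_edgeOf]

/-- Every edge of a semibipartite `r`-graph decomposes as `edgeOf v T`. -/
lemma decomp {m n r : ℕ} {H : Finset (Finset (Fin m ⊕ Fin n))} (hH : IsSemibipHG r H)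
    {e : Finset (Fin m ⊕ Fin n)} (he : e ∈ H) :
    ∃ (v : Fin m) (T : Finset (Fin n)), T.card = r - 1 ∧ e = edgeOf v T := by
  obtain ⟨hcard, hleft⟩ := hH e he
  obtain ⟨a, ha⟩ := Finset.card_eq_one.mp hleft
  have haa : a ∈ e.filter (fun x => x.isLeft = true) := ha ▸ mem_singleton_self a
  rw [mem_filter] at haa
  obtain ⟨hae, haL⟩ := haa
  rcases a with v | w
  swap
  · simp at haL
  have heq : e = edgeOf v (univ.filter (fun w => Sum.inr w ∈ e)) := by
    ext x
    rcases x with w | w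
    · simp only [inl_mem_edgeOf]
      constructor
      · intro hw
        have : Sum.inl w ∈ e.filter (fun x => x.isLeft = true) := by simp [mem_filter, hw]
        rw [ha, mem_singleton] at this
        exact Sum.inl.inj this
      · rintro rfl; exact hae
    · simp [inr_mem_edgeOf]
  refine ⟨v, univ.filter (fun w => Sum.inr w ∈ e), ?_, heq⟩
  have := card_edgeOf v (univ.filter (fun w => Sum.inr w ∈ e))
  rw [← heq, hcard] at this
  omega

/-- Characterization of edges of the complete multipartite hypergraph. -/
lemma mem_cmp_iff {r : ℕ} {s : Fin r → ℕ} {e : Finset (Σ i, Fin (s i))} :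
    e ∈ completeMultipartiteHG r s ↔
      ∃ c : ∀ i, Fin (s i), e = univ.image fun i => ⟨i, c i⟩ := by
  constructor
  · intro h
    rw [completeMultipartiteHG, mem_filter] at h
    have h1 := h.2
    have hex : ∀ i : Fin r, ∃ y : Fin (s i), ⟨i, y⟩ ∈ e := by
      intro i
      obtain ⟨a, hai⟩ := Finset.card_eq_one.mp (h1 i)
      have haa : a ∈ e.filter (fun x => x.1 = i) := hai ▸ mem_singleton_self a
      rw [mem_filter] at haa
      obtain ⟨j, y⟩ := a
      obtain ⟨hae, rfl⟩ := haa
      exact ⟨y, hae⟩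
    choose c hc using hex
    refine ⟨c, ?_⟩
    ext x
    simp only [mem_image, mem_univ, true_and]
    constructor
    · intro hx
      refine ⟨x.1, ?_⟩
      have hx' : x ∈ e.filter (fun z => z.1 = x.1) := by simp [mem_filter, hx]
      have hc' : (⟨x.1, c x.1⟩ : Σ i, Fin (s i)) ∈ e.filter (fun z => z.1 = x.1) := by
        simp [mem_filter, hc x.1]
      obtain ⟨a, hai⟩ := Finset.card_eq_one.mp (h1 x.1)
      rw [hai, mem_singleton] at hx' hc'
      rw [hc', ← hx']
    · rintro ⟨i, rfl⟩
      exact hc i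
  · rintro ⟨c, rfl⟩
    rw [completeMultipartiteHG, mem_filter]
    refine ⟨mem_univ _, fun i => ?_⟩
    have : (univ.image fun j => (⟨j, c j⟩ : Σ i, Fin (s i))).filter (fun x => x.1 = i)
        = {⟨i, c i⟩} := by
      ext x
      simp only [mem_filter, mem_image, mem_univ, true_and, mem_singleton]
      constructor
      · rintro ⟨⟨j, rfl⟩, hj⟩
        simp only at hj
        subst hj; rfl
      · rintro rfl
        exact ⟨⟨i, rfl⟩, rfl⟩
    rw [this, card_singleton]

end ZProof
namespace ZProof
open Finset

variable {m n : ℕ}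

/-- degree of a right `(r-1)`-set -/
def deg (H : Finset (Finset (Fin m ⊕ Fin n))) (T : Finset (Fin n)) : ℕ :=
  (univ.filter (fun v : Fin m => edgeOf v T ∈ H)).card

/-- common link of a set `A` of left vertices -/
def linkA (r : ℕ) (H : Finset (Finset (Fin m ⊕ Fin n))) (A : Finset (Fin m)) :
    Finset (Finset (Fin n)) :=
  ((univ : Finset (Fin n)).powersetCard (r - 1)).filter
    (fun T => ∀ a ∈ A, edgeOf a T ∈ H)

lemma card_eq_sum_deg {r : ℕ} {H : Finset (Finset (Fin m ⊕ Fin n))}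
    (hH : IsSemibipHG r H) :
    H.card = ∑ T ∈ (univ : Finset (Fin n)).powersetCard (r - 1), deg H T := by
  classical
  rw [show ∑ T ∈ (univ : Finset (Fin n)).powersetCard (r - 1), deg H T =
    (((univ : Finset (Fin n)).powersetCard (r - 1)).sigma
      (fun T => univ.filter (fun v : Fin m => edgeOf v T ∈ H))).card from
    (Finset.card_sigma _ _).symm]
  refine (Finset.card_bij (fun p _ => edgeOf p.2 p.1) ?_ ?_ ?_).symm
  · rintro ⟨T, v⟩ hp
    rw [mem_sigma, mem_filter] at hp
    exact hp.2.2
  · rintro ⟨T, v⟩ hp ⟨T', v'⟩ hp' h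
    obtain ⟨h1, h2⟩ := edgeOf_inj h
    subst h1; subst h2; rfl
  · intro e he
    obtain ⟨v, T, hT, rfl⟩ := decomp hH he
    refine ⟨⟨T, v⟩, ?_, rfl⟩
    rw [mem_sigma, mem_filter, mem_powersetCard]
    exact ⟨⟨subset_univ _, hT⟩, mem_univ _, he⟩

lemma choose_deg_eq {H : Finset (Finset (Fin m ⊕ Fin n))}
    (s0 : ℕ) (T : Finset (Fin n)) :
    (deg H T).choose s0 =
      (((univ : Finset (Fin m)).powersetCard s0).filter
        (fun A => ∀ a ∈ A, edgeOf a T ∈ H)).card := by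
  classical
  rw [deg, ← Finset.card_powersetCard]
  congr 1
  ext A
  simp only [mem_powersetCard, mem_filter, subset_iff, mem_univ, true_and, subset_univ,
    and_comm]
  tauto

/-- double counting pairs `(A, T)` -/
lemma sum_choose_deg {r : ℕ} {H : Finset (Finset (Fin m ⊕ Fin n))} (s0 : ℕ) :
    ∑ T ∈ (univ : Finset (Fin n)).powersetCard (r - 1), (deg H T).choose s0 =
      ∑ A ∈ (univ : Finset (Fin m)).powersetCard s0, (linkA r H A).card := by
  classical
  have : ∀ T, (deg H T).choose s0 = ∑ A ∈ (univ : Finset (Fin m)).powersetCard s0,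
      if (∀ a ∈ A, edgeOf a T ∈ H) then 1 else 0 := by
    intro T
    rw [choose_deg_eq, Finset.card_filter]
  simp only [this]
  rw [Finset.sum_comm]
  congr 1
  ext A
  rw [linkA, Finset.card_filter]
end ZProof
namespace ZProof
open Finset

lemma copy_of_system {m n k : ℕ} {s : Fin (k+2) → ℕ} {H : Finset (Finset (Fin m ⊕ Fin n))}
    {A : Finset (Fin m)} (hA : A.card = s 0)
    {W : Fin (k+1) → Finset (Fin n)} (hW : ∀ i, (W i).card = s i.succ)
    (hdisj : ∀ i j, i ≠ j → Disjoint (W i) (W j))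
    (htrans : ∀ c : Fin (k+1) → Fin n, (∀ i, c i ∈ W i) →
       ∀ a ∈ A, edgeOf a (univ.image c) ∈ H) :
    HasOrderedCopyHG s 0 H := by
  classical
  set a : Fin (s 0) → Fin m := fun y => (A.equivFin.symm (Fin.cast hA.symm y) : Fin m) with ha_def
  have haA : ∀ y, a y ∈ A := fun y => (A.equivFin.symm (Fin.cast hA.symm y)).2
  have ha_inj : Function.Injective a := by
    intro y y' h
    have := Subtype.val_injective h
    have := A.equivFin.symm.injective this
    exact Fin.cast_injective _ this
  set b : ∀ i : Fin (k+1), Fin (s i.succ) → Fin n :=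
    fun i y => ((W i).equivFin.symm (Fin.cast (hW i).symm y) : Fin n) with hb_def
  have hbW : ∀ i y, b i y ∈ W i := fun i y => ((W i).equivFin.symm (Fin.cast (hW i).symm y)).2
  have hb_inj : ∀ i, Function.Injective (b i) := by
    intro i y y' h
    have := Subtype.val_injective h
    have := (W i).equivFin.symm.injective this
    exact Fin.cast_injective _ this
  refine ⟨fun x => Fin.cases (motive := fun i => Fin (s i) → Fin m ⊕ Fin n)
    (fun y => Sum.inl (a y)) (fun i y => Sum.inr (b i y)) x.1 x.2, ?_, ?_, ?_⟩
  · rintro ⟨i, y⟩ ⟨i', y'⟩ hxx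
    rcases Fin.eq_zero_or_eq_succ i with rfl | ⟨j, rfl⟩ <;>
      rcases Fin.eq_zero_or_eq_succ i' with rfl | ⟨j', rfl⟩ <;>
      simp only [Fin.cases_zero, Fin.cases_succ] at hxx
    · exact congrArg _ (ha_inj (Sum.inl.inj hxx))
    · exact absurd hxx (by simp)
    · exact absurd hxx (by simp)
    · have hb : b j y = b j' y' := Sum.inr.inj hxx
      by_cases hjj : j = j'
      · subst hjj
        exact congrArg _ (hb_inj j hb)
      · exact absurd (hbW j' y') (Finset.disjoint_left.mp (hdisj j j' hjj) (hb ▸ hbW j y))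
  · intro e he
    rw [mem_cmp_iff] at he
    obtain ⟨c, rfl⟩ := he
    rw [Finset.image_image]
    show univ.image (fun i : Fin (k+2) =>
        Fin.cases (motive := fun i => Fin (s i) → Fin m ⊕ Fin n)
          (fun y => Sum.inl (a y)) (fun i y => Sum.inr (b i y)) i (c i)) ∈ H
    have key : univ.image (fun i : Fin (k+2) =>
        Fin.cases (motive := fun i => Fin (s i) → Fin m ⊕ Fin n)
          (fun y => Sum.inl (a y)) (fun i y => Sum.inr (b i y)) i (c i)) =
        edgeOf (a (c 0)) (univ.image (fun j : Fin (k+1) => b j (c j.succ))) := by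
      ext x
      simp only [mem_image, mem_univ, true_and, mem_edgeOf, Function.comp]
      constructor
      · rintro ⟨i, rfl⟩
        rcases Fin.eq_zero_or_eq_succ i with rfl | ⟨j, rfl⟩
        · left; simp
        · right
          exact ⟨b j (c j.succ), ⟨j, rfl⟩, by simp⟩
      · rintro (rfl | ⟨w, ⟨j, rfl⟩, rfl⟩)
        · exact ⟨0, by simp⟩
        · exact ⟨j.succ, by simp⟩
    rw [key]
    exact htrans _ (fun j => hbW j (c j.succ)) _ (haA (c 0))
  · rintro ⟨i, y⟩
    rcases Fin.eq_zero_or_eq_succ i with rfl | ⟨j, rfl⟩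
    · simp
    · simp [Fin.succ_ne_zero]

end ZProof
namespace ZProof
open Finset

/-- value of a sum element -/
def sval {n : ℕ} : Fin n ⊕ Fin n → Fin n := Sum.elim id id

lemma mem_linkA {m n r : ℕ} {H : Finset (Finset (Fin m ⊕ Fin n))} {A : Finset (Fin m)}
    {T : Finset (Fin n)} :
    T ∈ linkA r H A ↔ T.card = r - 1 ∧ ∀ a ∈ A, edgeOf a T ∈ H := by
  simp [linkA, mem_filter, mem_powersetCard]

/-- Base case: link bound for `r = 2`. -/
lemma link_bound_base {m n : ℕ} {s : Fin 2 → ℕ} (hs : ∀ i, 1 ≤ s i)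
    {H : Finset (Finset (Fin m ⊕ Fin n))}
    (hnc : ¬ HasOrderedCopyHG s 0 H) {A : Finset (Fin m)} (hA : A.card = s 0) :
    (linkA 2 H A).card ≤ s 1 - 1 := by
  classical
  by_contra hcon
  have hge : s 1 ≤ (linkA 2 H A).card := by
    have := hs 1; omega
  set U : Finset (Fin n) := univ.filter (fun u => {u} ∈ linkA 2 H A) with hU
  have hsub : linkA 2 H A ⊆ U.image (fun u => {u}) := by
    intro T hT
    have hc1 : T.card = 1 := (mem_linkA.mp hT).1
    obtain ⟨u, rfl⟩ := Finset.card_eq_one.mp hc1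
    exact mem_image.mpr ⟨u, by simp [hU, hT], rfl⟩
  have hUcard : s 1 ≤ U.card := by
    calc s 1 ≤ (linkA 2 H A).card := hge
    _ ≤ (U.image (fun u => {u})).card := card_le_card hsub
    _ ≤ U.card := card_image_le
  obtain ⟨W0, hW0U, hW0card⟩ := Finset.exists_subset_card_eq hUcard
  apply hnc
  refine copy_of_system (k := 0) hA (W := fun _ => W0) (fun i => ?_) (fun i j hij => ?_) ?_
  · have : i = 0 := Fin.eq_zero i
    rw [this, hW0card]; rfl
  · exact absurd ((Fin.eq_zero i).trans (Fin.eq_zero j).symm) hij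
  · intro c hc a ha
    have hc0 : c 0 ∈ U := hW0U (hc 0)
    rw [hU, mem_filter] at hc0
    have himg : univ.image c = {c 0} := by
      rw [show (univ : Finset (Fin 1)) = {0} from rfl]
      simp
    rw [himg]
    exact (mem_linkA.mp hc0.2).2 a ha

/-- Step case: link bound via orientation and the inductive hypothesis. -/
lemma link_bound_step {m n k : ℕ} {s : Fin (k+3) → ℕ} (hs : ∀ i, 1 ≤ s i)
    {H : Finset (Finset (Fin m ⊕ Fin n))}
    (hnc : ¬ HasOrderedCopyHG s 0 H) {A : Finset (Fin m)} (hA : A.card = s 0)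
    {B : ℝ}
    (hIH : ∀ H' : Finset (Finset (Fin n ⊕ Fin n)), IsSemibipHG (k+2) H' →
      ¬ HasOrderedCopyHG (fun i : Fin (k+2) => s i.succ) 0 H' → (H'.card : ℝ) ≤ B) :
    ((linkA (k+3) H A).card : ℝ) ≤ B / (k+2) := by
  classical
  set s' : Fin (k+2) → ℕ := fun i => s i.succ with hs'def
  set L := linkA (k+3) H A with hL
  have hTcard : ∀ T ∈ L, T.card = k + 2 := fun T hT => (mem_linkA.mp hT).1
  set H' : Finset (Finset (Fin n ⊕ Fin n)) :=
    (L.sigma (fun T => T)).image (fun p => edgeOf p.2 (p.1.erase p.2)) with hH'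
  have memH' : ∀ e', e' ∈ H' ↔ ∃ T ∈ L, ∃ v ∈ T, e' = edgeOf v (T.erase v) := by
    intro e'
    simp only [hH', mem_image, mem_sigma, Sigma.exists]
    constructor
    · rintro ⟨T, v, ⟨hT, hv⟩, rfl⟩
      exact ⟨T, hT, v, hv, rfl⟩
    · rintro ⟨T, hT, v, hv, rfl⟩
      exact ⟨T, v, ⟨hT, hv⟩, rfl⟩
  -- cardinality
  have hcard : H'.card = L.card * (k + 2) := by
    rw [hH', Finset.card_image_of_injOn, Finset.card_sigma]
    · rw [Finset.sum_congr rfl (fun T hT => hTcard T hT), Finset.sum_const, smul_eq_mul]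
    · rintro ⟨T, v⟩ hp ⟨T', v'⟩ hp' h
      simp only [mem_coe, mem_sigma] at hp hp'
      dsimp only at h
      obtain ⟨h1, h2⟩ := edgeOf_inj h
      have hTT : T = T' := by
        rw [← Finset.insert_erase hp.2, ← Finset.insert_erase hp'.2, h2, h1]
      subst hTT; subst h1; rfl
  -- semibipartite
  have hsemi : IsSemibipHG (k+2) H' := by
    intro e' he'
    obtain ⟨T, hT, v, hv, rfl⟩ := (memH' e').mp he'
    constructor
    · rw [card_edgeOf, Finset.card_erase_of_mem hv, hTcard T hT]
      omega
    · rw [filter_isLeft_edgeOf, card_singleton]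
  -- no ordered copy
  have hnc' : ¬ HasOrderedCopyHG s' 0 H' := by
    rintro ⟨f', hinj, hedge, hleft⟩
    have hval0 : ∀ y : Fin (s' 0), f' ⟨0, y⟩ = Sum.inl (sval (f' ⟨0, y⟩)) := by
      intro y
      have := (hleft ⟨0, y⟩).mpr rfl
      rcases hfy : f' ⟨0, y⟩ with u | u
      · rfl
      · rw [hfy] at this; simp at this
    have hvalsucc : ∀ (i : Fin (k+2)) (_ : i ≠ 0) (y : Fin (s' i)),
        f' ⟨i, y⟩ = Sum.inr (sval (f' ⟨i, y⟩)) := by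
      intro i hi y
      rcases hfy : f' ⟨i, y⟩ with u | u
      · exact absurd ((hleft ⟨i, y⟩).mp (by rw [hfy]; rfl)) hi
      · rfl
    -- no left-right clash within an edge of H'
    have hclash : ∀ (j : Fin (k+2)) (_ : j ≠ 0) (y : Fin (s' 0)) (z : Fin (s' j)),
        sval (f' ⟨0, y⟩) ≠ sval (f' ⟨j, z⟩) := by
      intro j hj y z hvv
      set c' : ∀ i, Fin (s' i) :=
        Function.update (Function.update (fun i => ⟨0, hs i.succ⟩) j z) 0 y with hc'
      have hc'0 : c' 0 = y := Function.update_self _ _ _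
      have hc'j : c' j = z := by
        rw [hc', Function.update_of_ne hj, Function.update_self]
      have he0 : (univ.image fun i => (⟨i, c' i⟩ : Σ i, Fin (s' i)))
          ∈ completeMultipartiteHG (k+2) s' := mem_cmp_iff.mpr ⟨c', rfl⟩
      have hE' := hedge _ he0
      obtain ⟨T, hT, v, hv, heq⟩ := (memH' _).mp hE'
      have hmem0 : f' ⟨0, c' 0⟩ ∈ (univ.image fun i => (⟨i, c' i⟩ : Σ i, Fin (s' i))).image f' :=
        mem_image.mpr ⟨_, mem_image.mpr ⟨0, mem_univ _, rfl⟩, rfl⟩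
      have hmemj : f' ⟨j, c' j⟩ ∈ (univ.image fun i => (⟨i, c' i⟩ : Σ i, Fin (s' i))).image f' :=
        mem_image.mpr ⟨_, mem_image.mpr ⟨j, mem_univ _, rfl⟩, rfl⟩
      rw [heq] at hmem0 hmemj
      rw [hc'0, hval0 y] at hmem0
      rw [hc'j, hvalsucc j hj z] at hmemj
      have h1 : sval (f' ⟨0, y⟩) = v := inl_mem_edgeOf.mp hmem0
      have h2 : sval (f' ⟨j, z⟩) ∈ T.erase v := inr_mem_edgeOf.mp hmemj
      rw [← hvv, h1] at h2
      exact (Finset.ne_of_mem_erase h2) rfl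
    set W : Fin (k+2) → Finset (Fin n) :=
      fun i => univ.image (fun y : Fin (s' i) => sval (f' ⟨i, y⟩)) with hW
    have hWinj : ∀ i : Fin (k+2), Function.Injective (fun y : Fin (s' i) => sval (f' ⟨i, y⟩)) := by
      intro i y y' hyy
      by_cases hi : i = 0
      · subst hi
        have := (hval0 y).trans (congrArg Sum.inl hyy)
        rw [← hval0 y'] at this
        have := hinj this
        simpa using this
      · have := (hvalsucc i hi y).trans (congrArg Sum.inr hyy)
        rw [← hvalsucc i hi y'] at this
        have := hinj this
        simpa using this
    have hWcard : ∀ i : Fin (k+2), (W i).card = s i.succ := by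
      intro i
      rw [hW]
      rw [Finset.card_image_of_injective _ (hWinj i), card_univ, Fintype.card_fin]
    have hWdisj : ∀ i j : Fin (k+2), i ≠ j → Disjoint (W i) (W j) := by
      intro i j hij
      rw [Finset.disjoint_left]
      intro u hu hu'
      rw [hW] at hu hu'
      obtain ⟨y, _, hy⟩ := mem_image.mp hu
      obtain ⟨z, _, hz⟩ := mem_image.mp hu'
      by_cases hi : i = 0
      · subst hi
        by_cases hj : j = 0
        · exact hij hj.symm
        · exact hclash j hj y z (by rw [hy, hz])
      · by_cases hj : j = 0
        · subst hj
          exact hclash i hi z y (by rw [hy, hz])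
        · have : f' ⟨i, y⟩ = f' ⟨j, z⟩ := by
            rw [hvalsucc i hi y, hvalsucc j hj z, hy, hz]
          have := hinj this
          rw [Sigma.mk.inj_iff] at this
          exact hij this.1
    apply hnc
    refine copy_of_system (k := k+1) hA (W := W) hWcard hWdisj ?_
    intro c hc
    have hcy : ∀ i : Fin (k+2), ∃ y : Fin (s' i), sval (f' ⟨i, y⟩) = c i := by
      intro i
      have := hc i
      rw [hW] at this
      obtain ⟨y, _, hy⟩ := mem_image.mp this
      exact ⟨y, hy⟩
    choose y hy using hcy
    have he0 : (univ.image fun i => (⟨i, y i⟩ : Σ i, Fin (s' i)))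
        ∈ completeMultipartiteHG (k+2) s' := mem_cmp_iff.mpr ⟨y, rfl⟩
    have hE' := hedge _ he0
    obtain ⟨T, hT, v, hv, heq⟩ := (memH' _).mp hE'
    -- characterize members of the image edge
    have hinlE : ∀ w : Fin n, Sum.inl w ∈ (univ.image fun i => (⟨i, y i⟩ : Σ i, Fin (s' i))).image f'
        ↔ w = c 0 := by
      intro w
      rw [Finset.image_image]
      simp only [mem_image, mem_univ, true_and, Function.comp]
      constructor
      · rintro ⟨i, hi⟩
        by_cases h0 : i = 0
        · subst h0
          rw [hval0 (y 0)] at hi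
          have := Sum.inl.inj hi
          rw [← this, hy 0]
        · rw [hvalsucc i h0 (y i)] at hi
          exact absurd hi (by simp)
      · rintro rfl
        exact ⟨0, by rw [hval0 (y 0), hy 0]⟩
    have hinrE : ∀ w : Fin n, Sum.inr w ∈ (univ.image fun i => (⟨i, y i⟩ : Σ i, Fin (s' i))).image f'
        ↔ ∃ i : Fin (k+2), i ≠ 0 ∧ c i = w := by
      intro w
      rw [Finset.image_image]
      simp only [mem_image, mem_univ, true_and, Function.comp]
      constructor
      · rintro ⟨i, hi⟩
        by_cases h0 : i = 0
        · subst h0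
          rw [hval0 (y 0)] at hi
          exact absurd hi (by simp)
        · rw [hvalsucc i h0 (y i)] at hi
          exact ⟨i, h0, by rw [← Sum.inr.inj hi, hy i]⟩
      · rintro ⟨i, h0, rfl⟩
        exact ⟨i, by rw [hvalsucc i h0 (y i), hy i]⟩
    have hvc0 : v = c 0 := by
      have : Sum.inl v ∈ edgeOf v (T.erase v) := by simp [mem_edgeOf]
      rw [← heq] at this
      exact (hinlE v).mp this
    have hTc : T = univ.image c := by
      ext u
      simp only [mem_image, mem_univ, true_and]
      constructor
      · intro hu
        by_cases huv : u = v
        · exact ⟨0, by rw [huv, hvc0]⟩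
        · have : Sum.inr u ∈ edgeOf v (T.erase v) :=
            inr_mem_edgeOf.mpr (Finset.mem_erase.mpr ⟨huv, hu⟩)
          rw [← heq] at this
          obtain ⟨i, _, hi⟩ := (hinrE u).mp this
          exact ⟨i, hi⟩
      · rintro ⟨i, rfl⟩
        by_cases h0 : i = 0
        · subst h0; rw [← hvc0]; exact hv
        · have : Sum.inr (c i) ∈ edgeOf v (T.erase v) := by
            rw [← heq]
            exact (hinrE (c i)).mpr ⟨i, h0, rfl⟩
          exact Finset.mem_of_mem_erase (inr_mem_edgeOf.mp this)
    intro a ha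
    rw [← hTc]
    exact (mem_linkA.mp hT).2 a ha
  -- conclude
  have hB := hIH H' hsemi hnc'
  rw [hcard] at hB
  rw [le_div_iff₀ (by positivity)]
  calc ((linkA (k+3) H A).card : ℝ) * (k + 2) = ((L.card * (k+2) : ℕ) : ℝ) := by
        push_cast [hL]; ring
  _ ≤ B := hB

end ZProof
namespace ZProof
open Finset

lemma pow_le_factorial_mul_choose (d t : ℕ) (ht : 1 ≤ t) :
    (max ((d : ℝ) - ((t : ℝ) - 1)) 0) ^ t ≤ (t.factorial : ℝ) * (d.choose t) := by
  by_cases hdt : t ≤ d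
  · have hcast : ((t:ℝ)) ≤ (d:ℝ) := by exact_mod_cast hdt
    have h1 : max ((d : ℝ) - ((t : ℝ) - 1)) 0 = ((d + 1 - t : ℕ) : ℝ) := by
      rw [max_eq_left (by linarith)]
      push_cast [Nat.cast_sub (by omega : t ≤ d + 1)]
      ring
    rw [h1]
    have h2 : ((d + 1 - t) ^ t : ℕ) ≤ d.descFactorial t := Nat.pow_sub_le_descFactorial d t
    have h3 : d.descFactorial t = t.factorial * d.choose t :=
      Nat.descFactorial_eq_factorial_mul_choose d t
    calc ((d + 1 - t : ℕ) : ℝ) ^ t = (((d + 1 - t) ^ t : ℕ) : ℝ) := by push_cast; ring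
    _ ≤ ((t.factorial * d.choose t : ℕ) : ℝ) := by exact_mod_cast h3 ▸ h2
    _ = (t.factorial : ℝ) * (d.choose t) := by push_cast; ring
  · have h1 : max ((d : ℝ) - ((t : ℝ) - 1)) 0 = 0 := by
      rw [max_eq_right]
      have : (d : ℝ) ≤ (t : ℝ) - 1 := by
        have : (d : ℝ) + 1 ≤ t := by exact_mod_cast Nat.succ_le_of_lt (by omega)
        linarith
      linarith
    rw [h1, zero_pow (by omega)]
    positivity

lemma choose_le_pow_div (n j : ℕ) : ((n.choose j : ℕ) : ℝ) ≤ (n : ℝ) ^ j / (j.factorial : ℝ) := by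
  rw [le_div_iff₀ (by positivity)]
  have h1 : j.factorial * n.choose j = n.descFactorial j :=
    (Nat.descFactorial_eq_factorial_mul_choose n j).symm
  have h2 : n.descFactorial j ≤ n ^ j := Nat.descFactorial_le_pow n j
  calc ((n.choose j : ℕ) : ℝ) * j.factorial = ((j.factorial * n.choose j : ℕ) : ℝ) := by
        push_cast; ring
  _ ≤ ((n ^ j : ℕ) : ℝ) := by exact_mod_cast h1 ▸ h2
  _ = (n : ℝ) ^ j := by push_cast; ring

/-- The convexity step of the Kővári–Sós–Turán argument. -/
lemma convexity_bound {ι : Type*} [DecidableEq ι] (F : Finset ι) (d : ι → ℕ) (t m : ℕ)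
    (ht : 1 ≤ t) (M : ℝ) (hM : 0 ≤ M)
    (hsum : ((∑ T ∈ F, (d T).choose t : ℕ) : ℝ) ≤ (m.choose t : ℕ) * M) :
    ((∑ T ∈ F, d T : ℕ) : ℝ) ≤ ((t : ℝ) - 1) * F.card +
      (m : ℝ) * M ^ ((1:ℝ)/t) * (F.card : ℝ) ^ (1 - (1:ℝ)/t) := by
  have htR : (0:ℝ) < t := by exact_mod_cast ht
  rcases F.eq_empty_or_nonempty with rfl | hFne
  · simp
    positivity
  set N := F.card with hN
  have hNpos : 0 < (N : ℝ) := by exact_mod_cast card_pos.mpr hFne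
  set x : ι → ℝ := fun T => max ((d T : ℝ) - ((t:ℝ) - 1)) 0 with hx
  have hx0 : ∀ T ∈ F, 0 ≤ x T := fun T _ => le_max_right _ _
  -- step 1
  have h1 : ∑ T ∈ F, x T ^ t ≤ (m : ℝ) ^ t * M := by
    calc ∑ T ∈ F, x T ^ t ≤ ∑ T ∈ F, (t.factorial : ℝ) * ((d T).choose t) :=
          Finset.sum_le_sum (fun T _ => pow_le_factorial_mul_choose (d T) t ht)
    _ = (t.factorial : ℝ) * ((∑ T ∈ F, (d T).choose t : ℕ) : ℝ) := by
          rw [← Finset.mul_sum]; push_cast; ring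
    _ ≤ (t.factorial : ℝ) * ((m.choose t : ℕ) * M) := by
          apply mul_le_mul_of_nonneg_left hsum (by positivity)
    _ = ((t.factorial * m.choose t : ℕ) : ℝ) * M := by push_cast; ring
    _ ≤ ((m ^ t : ℕ) : ℝ) * M := by
          apply mul_le_mul_of_nonneg_right _ hM
          exact_mod_cast (Nat.descFactorial_eq_factorial_mul_choose m t ▸
            Nat.descFactorial_le_pow m t)
    _ = (m : ℝ) ^ t * M := by push_cast; ring
  -- step 2 : Jensen
  have h2 : (∑ T ∈ F, x T) ^ t ≤ (N : ℝ) ^ (t - 1) * ∑ T ∈ F, x T ^ t := by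
    have ht' : t - 1 + 1 = t := by omega
    have := pow_sum_div_card_le_sum_pow (s := F) (f := x) hx0 (t - 1)
    rw [ht'] at this
    rw [← hN] at this
    calc (∑ T ∈ F, x T) ^ t = ((∑ T ∈ F, x T) ^ t / (N:ℝ) ^ (t-1)) * (N:ℝ) ^ (t-1) := by
          field_simp
    _ ≤ (∑ T ∈ F, x T ^ t) * (N:ℝ) ^ (t-1) := by
          apply mul_le_mul_of_nonneg_right this (by positivity)
    _ = (N : ℝ) ^ (t - 1) * ∑ T ∈ F, x T ^ t := by ring
  -- step 3
  have h3 : ((∑ T ∈ F, d T : ℕ) : ℝ) - ((t:ℝ) - 1) * N ≤ ∑ T ∈ F, x T := by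
    have h := Finset.sum_le_sum (s := F) (fun T _ => le_max_left ((d T : ℝ) - ((t:ℝ) - 1)) 0)
    rw [Finset.sum_sub_distrib, Finset.sum_const, nsmul_eq_mul] at h
    have hc : ∑ T ∈ F, ((d T : ℕ) : ℝ) = ((∑ T ∈ F, d T : ℕ) : ℝ) := by push_cast; rfl
    rw [hc, ← hN] at h
    linarith
  by_cases hE : ((∑ T ∈ F, d T : ℕ) : ℝ) ≤ ((t:ℝ) - 1) * N
  · have : 0 ≤ (m : ℝ) * M ^ ((1:ℝ)/t) * (N : ℝ) ^ (1 - (1:ℝ)/t) := by positivity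
    linarith
  · push_neg at hE
    set y : ℝ := ((∑ T ∈ F, d T : ℕ) : ℝ) - ((t:ℝ) - 1) * N with hy
    have hypos : 0 < y := by rw [hy]; linarith
    have h4 : y ^ t ≤ (N : ℝ) ^ (t - 1) * ((m:ℝ) ^ t * M) :=
      le_trans (le_trans (pow_le_pow_left₀ hypos.le h3 t) h2)
        (mul_le_mul_of_nonneg_left h1 (by positivity))
    have h5 : y ≤ (m : ℝ) * M ^ ((1:ℝ)/t) * (N : ℝ) ^ (1 - (1:ℝ)/t) := by
      have hyt : y = (y ^ t) ^ ((1:ℝ)/t) := by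
        rw [← Real.rpow_natCast y t, ← Real.rpow_mul hypos.le]
        rw [mul_one_div, div_self (ne_of_gt htR), Real.rpow_one]
      rw [hyt]
      calc (y ^ t) ^ ((1:ℝ)/t) ≤ ((N : ℝ) ^ (t - 1) * ((m:ℝ) ^ t * M)) ^ ((1:ℝ)/t) :=
            Real.rpow_le_rpow (by positivity) h4 (by positivity)
      _ = ((N:ℝ) ^ (t-1)) ^ ((1:ℝ)/t) * ((m:ℝ)^t) ^ ((1:ℝ)/t) * M ^ ((1:ℝ)/t) := by
            rw [Real.mul_rpow (by positivity) (by positivity),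
              Real.mul_rpow (by positivity) hM]
            ring
      _ = (m : ℝ) * M ^ ((1:ℝ)/t) * (N : ℝ) ^ (1 - (1:ℝ)/t) := by
            have e1 : ((N:ℝ) ^ (t-1)) ^ ((1:ℝ)/t) = (N : ℝ) ^ (1 - (1:ℝ)/t) := by
              rw [← Real.rpow_natCast (N:ℝ) (t-1), ← Real.rpow_mul hNpos.le]
              congr 1
              have : ((t - 1 : ℕ) : ℝ) = (t : ℝ) - 1 := by
                push_cast [Nat.cast_sub ht]; ring
              rw [this]
              field_simp
            have e2 : ((m:ℝ)^t) ^ ((1:ℝ)/t) = (m : ℝ) := by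
              rw [← Real.rpow_natCast (m:ℝ) t, ← Real.rpow_mul (by positivity)]
              rw [mul_one_div, div_self (ne_of_gt htR), Real.rpow_one]
            rw [e1, e2]
            ring
    rw [hy] at h5
    linarith

lemma rpow_trick {M Nr R : ℝ} (hM : 0 ≤ M) (hN : 0 ≤ Nr) (hR : 0 ≤ R) (t : ℕ) (ht : 1 ≤ t)
    (h : M * Nr ^ (t - 1) ≤ R ^ t) :
    M ^ ((1:ℝ)/t) * Nr ^ (1 - (1:ℝ)/t) ≤ R := by
  have htR : (0:ℝ) < t := by exact_mod_cast ht
  have key : M ^ ((1:ℝ)/t) * Nr ^ (1 - (1:ℝ)/t) = (M * Nr ^ (t - 1)) ^ ((1:ℝ)/t) := by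
    rw [Real.mul_rpow hM (by positivity)]
    congr 1
    rw [← Real.rpow_natCast Nr (t-1), ← Real.rpow_mul hN]
    congr 1
    have : ((t - 1 : ℕ) : ℝ) = (t : ℝ) - 1 := by push_cast [Nat.cast_sub ht]; ring
    rw [this]
    field_simp
  rw [key]
  calc (M * Nr ^ (t - 1)) ^ ((1:ℝ)/t) ≤ (R ^ t) ^ ((1:ℝ)/t) :=
        Real.rpow_le_rpow (by positivity) h (by positivity)
  _ = R := by
        rw [← Real.rpow_natCast R t, ← Real.rpow_mul hR]
        rw [mul_one_div, div_self (ne_of_gt htR), Real.rpow_one]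

lemma nat_rpow_le_self (c : ℕ) {e : ℝ} (he : 0 < e) (he1 : e ≤ 1) : (c : ℝ) ^ e ≤ (c : ℝ) := by
  rcases Nat.eq_zero_or_pos c with rfl | hc
  · rw [Nat.cast_zero, Real.zero_rpow (ne_of_gt he)]
  · have h1 : (1:ℝ) ≤ c := by exact_mod_cast hc
    calc (c:ℝ) ^ e ≤ (c:ℝ) ^ (1:ℝ) := Real.rpow_le_rpow_of_exponent_le h1 he1
    _ = c := Real.rpow_one _

end ZProof
namespace ZProof
open Finset

def sig (k : ℕ) (s : Fin (k+2) → ℕ) : ℕ := (∑ i ∈ univ.erase 0, s i) - (k+1)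

def Pprod (k : ℕ) (s : Fin (k+2) → ℕ) : ℕ := ∏ i ∈ univ.erase (Fin.last (k+1)), s i

noncomputable def Bnd (k m n : ℕ) (s : Fin (k+2) → ℕ) : ℝ :=
  ((sig k s : ℕ) : ℝ) ^ ((1:ℝ)/(s 0 : ℝ)) / ((k:ℝ)+1) * (m:ℝ) *
    (n:ℝ) ^ (((k:ℝ)+1) - 1/((Pprod k s : ℕ) : ℝ)) +
  ((s 0 : ℝ) - 1) * ((n.choose (k+1) : ℕ) : ℝ)

lemma sum_erase_zero {N : ℕ} {M : Type*} [AddCommMonoid M] (g : Fin (N+1) → M) :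
    ∑ i ∈ (univ : Finset (Fin (N+1))).erase 0, g i = ∑ i : Fin N, g i.succ := by
  rw [Fin.univ_succ, Finset.erase_cons, Finset.sum_map]
  rfl

lemma sum_s_ge {k : ℕ} {s : Fin (k+2) → ℕ} (hs : ∀ i, 1 ≤ s i) :
    k + 1 ≤ ∑ i ∈ (univ : Finset (Fin (k+2))).erase 0, s i := by
  have hcard : ((univ : Finset (Fin (k+2))).erase 0).card = k + 1 := by
    rw [Finset.card_erase_of_mem (mem_univ _), card_univ, Fintype.card_fin]
    omega
  have h := Finset.card_nsmul_le_sum ((univ : Finset (Fin (k+2))).erase 0) s 1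
    (fun i _ => hs i)
  rw [hcard, smul_eq_mul, mul_one] at h
  exact h

lemma Pprod_pos {k : ℕ} {s : Fin (k+2) → ℕ} (hs : ∀ i, 1 ≤ s i) : 1 ≤ Pprod k s :=
  Finset.one_le_prod' (fun i _ => hs i)

lemma sig_cast {k : ℕ} {s : Fin (k+2) → ℕ} (hs : ∀ i, 1 ≤ s i) :
    ((sig k s : ℕ) : ℝ) = (∑ i ∈ (univ : Finset (Fin (k+2))).erase 0, (s i : ℝ)) - (k+1) := by
  rw [sig, Nat.cast_sub (sum_s_ge hs)]
  push_cast
  ring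

/-- tail sum identity -/
lemma sig_succ {k : ℕ} {s : Fin (k+3) → ℕ} (hs : ∀ i, 1 ≤ s i) :
    ((sig (k+1) s : ℕ) : ℝ) = ((sig k (fun i => s i.succ) : ℕ) : ℝ) + (s 1 : ℝ) - 1 := by
  rw [sig_cast hs, sig_cast (fun i => hs i.succ)]
  have h1 : ∑ i ∈ (univ : Finset (Fin (k+3))).erase 0, (s i : ℝ)
      = ∑ i : Fin (k+2), (s i.succ : ℝ) := sum_erase_zero _
  have h2 : ∑ i : Fin (k+2), (s i.succ : ℝ) = (s (0 : Fin (k+2)).succ : ℝ) +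
      ∑ i ∈ (univ : Finset (Fin (k+2))).erase 0, (s i.succ : ℝ) :=
    (Finset.add_sum_erase _ _ (mem_univ (0 : Fin (k+2)))).symm
  rw [Fin.succ_zero_eq_one] at h2
  rw [h1, h2]
  push_cast
  ring

/-- product identity -/
lemma Pprod_succ {k : ℕ} (s : Fin (k+3) → ℕ) :
    Pprod (k+1) s = s 0 * Pprod k (fun i => s i.succ) := by
  rw [Pprod, Pprod]
  have h0mem : (0 : Fin (k+3)) ∈ (univ : Finset (Fin (k+3))).erase (Fin.last (k+2)) := by
    rw [Finset.mem_erase]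
    refine ⟨?_, mem_univ _⟩
    intro h
    have := congrArg Fin.val h
    simp [Fin.last] at this
  rw [← Finset.mul_prod_erase _ _ h0mem]
  congr 1
  have key : ((univ : Finset (Fin (k+3))).erase (Fin.last (k+2))).erase 0 =
      ((univ : Finset (Fin (k+2))).erase (Fin.last (k+1))).map
        ⟨Fin.succ, Fin.succ_injective _⟩ := by
    rw [Finset.erase_right_comm, Fin.univ_succ, Finset.erase_cons,
      Finset.map_erase]
    congr 1
  rw [key, Finset.prod_map]
  rfl

lemma Bnd_nonneg (k m n : ℕ) (s : Fin (k+2) → ℕ) (hs : ∀ i, 1 ≤ s i) : 0 ≤ Bnd k m n s := by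
  rw [Bnd]
  have h1 : (1:ℝ) ≤ (s 0 : ℝ) := by exact_mod_cast hs 0
  have : (0:ℝ) ≤ ((s 0 : ℝ) - 1) := by linarith
  positivity

end ZProof
namespace ZProof
open Finset

/-- Generic KST-type step: from a uniform bound on common links to the edge bound. -/
lemma generic_step {k m n : ℕ} (hm : 1 ≤ m) (hn : 1 ≤ n) (s : Fin (k+2) → ℕ)
    (hs : ∀ i, 1 ≤ s i) (H : Finset (Finset (Fin m ⊕ Fin n)))
    (hH : IsSemibipHG (k+2) H) (M : ℝ) (hM : 0 ≤ M)
    (hlink : ∀ A : Finset (Fin m), A.card = s 0 → ((linkA (k+2) H A).card : ℝ) ≤ M)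
    (hfact5 : M * ((n.choose (k+1) : ℕ) : ℝ) ^ (s 0 - 1) ≤
      (((sig k s : ℕ) : ℝ) ^ ((1:ℝ)/(s 0 : ℝ)) / ((k:ℝ)+1) *
        (n:ℝ) ^ (((k:ℝ)+1) - 1/((Pprod k s : ℕ) : ℝ))) ^ (s 0)) :
    (H.card : ℝ) ≤ Bnd k m n s := by
  classical
  have ht : 1 ≤ s 0 := hs 0
  set F := (univ : Finset (Fin n)).powersetCard (k+1) with hF
  have hE : H.card = ∑ T ∈ F, deg H T := card_eq_sum_deg hH
  have hFcard : F.card = n.choose (k+1) := by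
    rw [hF, Finset.card_powersetCard, card_univ, Fintype.card_fin]
  have hpc : ((univ : Finset (Fin m)).powersetCard (s 0)).card = m.choose (s 0) := by
    rw [Finset.card_powersetCard, card_univ, Fintype.card_fin]
  have hchoose : ((∑ T ∈ F, (deg H T).choose (s 0) : ℕ) : ℝ) ≤ ((m.choose (s 0) : ℕ) : ℝ) * M := by
    have h1 : ∑ T ∈ F, (deg H T).choose (s 0) =
        ∑ A ∈ (univ : Finset (Fin m)).powersetCard (s 0), (linkA (k+2) H A).card :=
      sum_choose_deg (r := k+2) (s 0)
    rw [h1]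
    push_cast
    calc ∑ A ∈ (univ : Finset (Fin m)).powersetCard (s 0), ((linkA (k+2) H A).card : ℝ)
        ≤ ∑ A ∈ (univ : Finset (Fin m)).powersetCard (s 0), M :=
          Finset.sum_le_sum (fun A hA => hlink A (mem_powersetCard.mp hA).2)
    _ = (((univ : Finset (Fin m)).powersetCard (s 0)).card : ℝ) * M := by
          rw [Finset.sum_const, nsmul_eq_mul]
    _ = ((m.choose (s 0) : ℕ) : ℝ) * M := by rw [hpc]
  have hconv := convexity_bound F (deg H) (s 0) m ht M hM hchoose
  rw [hE]
  set R := ((sig k s : ℕ) : ℝ) ^ ((1:ℝ)/(s 0 : ℝ)) / ((k:ℝ)+1) *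
    (n:ℝ) ^ (((k:ℝ)+1) - 1/((Pprod k s : ℕ) : ℝ)) with hR
  have hR0 : 0 ≤ R := by rw [hR]; positivity
  have htrick : M ^ ((1:ℝ)/(s 0 : ℝ)) * ((n.choose (k+1) : ℕ) : ℝ) ^ (1 - (1:ℝ)/(s 0 : ℝ)) ≤ R :=
    rpow_trick hM (by positivity) hR0 (s 0) ht hfact5
  have hfin : (m : ℝ) * (M ^ ((1:ℝ)/(s 0 : ℝ)) * ((n.choose (k+1) : ℕ) : ℝ) ^ (1 - (1:ℝ)/(s 0 : ℝ)))
      ≤ (m : ℝ) * R := by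
    apply mul_le_mul_of_nonneg_left htrick (by positivity)
  rw [Bnd]
  rw [hFcard] at hconv
  calc ((∑ T ∈ F, deg H T : ℕ) : ℝ)
      ≤ ((s 0 : ℝ) - 1) * ((n.choose (k+1) : ℕ) : ℝ) +
        (m : ℝ) * M ^ ((1:ℝ)/(s 0 : ℝ)) * ((n.choose (k+1) : ℕ) : ℝ) ^ (1 - (1:ℝ)/(s 0 : ℝ)) :=
        hconv
  _ ≤ ((s 0 : ℝ) - 1) * ((n.choose (k+1) : ℕ) : ℝ) + (m : ℝ) * R := by
        rw [mul_assoc]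
        linarith [hfin]
  _ = ((sig k s : ℕ) : ℝ) ^ ((1:ℝ)/(s 0 : ℝ)) / ((k:ℝ)+1) * (m:ℝ) *
        (n:ℝ) ^ (((k:ℝ)+1) - 1/((Pprod k s : ℕ) : ℝ)) +
      ((s 0 : ℝ) - 1) * ((n.choose (k+1) : ℕ) : ℝ) := by
        rw [hR]; ring

end ZProof
namespace ZProof
open Finset

lemma fact5_base {n : ℕ} (hn : 1 ≤ n) (s : Fin 2 → ℕ) (hs : ∀ i, 1 ≤ s i) :
    ((s 1 - 1 : ℕ) : ℝ) * ((n.choose 1 : ℕ) : ℝ) ^ (s 0 - 1) ≤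
      (((sig 0 s : ℕ) : ℝ) ^ ((1:ℝ)/(s 0 : ℝ)) / (((0:ℕ):ℝ)+1) *
        (n:ℝ) ^ ((((0:ℕ):ℝ)+1) - 1/((Pprod 0 s : ℕ) : ℝ))) ^ (s 0) := by
  have ht : 1 ≤ s 0 := hs 0
  have htR : (0:ℝ) < (s 0 : ℝ) := by exact_mod_cast ht
  have hsig : sig 0 s = s 1 - 1 := by
    rw [sig]
    have h01 : (univ : Finset (Fin 2)).erase 0 = {1} := by decide
    rw [h01, Finset.sum_singleton]
  have hP : Pprod 0 s = s 0 := by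
    rw [Pprod]
    have h02 : (univ : Finset (Fin 2)).erase (Fin.last 1) = {0} := by decide
    rw [h02, Finset.prod_singleton]
  rw [hsig, hP, Nat.choose_one_right]
  have hrw : ((((s 1 - 1 : ℕ)) : ℝ) ^ ((1:ℝ)/(s 0 : ℝ)) / (((0:ℕ):ℝ)+1) *
      (n:ℝ) ^ ((((0:ℕ):ℝ)+1) - 1/((s 0 : ℕ) : ℝ))) ^ (s 0)
      = ((s 1 - 1 : ℕ) : ℝ) * (n:ℝ) ^ ((s 0 : ℝ) - 1) := by
    rw [show (((0:ℕ):ℝ)+1) = 1 by norm_num, div_one, mul_pow]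
    rw [← Real.rpow_natCast ((((s 1 - 1 : ℕ)) : ℝ) ^ ((1:ℝ)/(s 0 : ℝ))) (s 0),
      ← Real.rpow_mul (by positivity), one_div_mul_cancel (ne_of_gt htR), Real.rpow_one]
    rw [← Real.rpow_natCast ((n:ℝ) ^ ((1:ℝ) - 1/((s 0:ℕ) : ℝ))) (s 0),
      ← Real.rpow_mul (by positivity)]
    congr 2
    field_simp
  rw [hrw]
  have hpow : ((n:ℝ)) ^ (s 0 - 1) = (n:ℝ) ^ ((s 0 : ℝ) - 1) := by
    rw [← Real.rpow_natCast (n:ℝ) (s 0 - 1)]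
    congr 1
    push_cast [Nat.cast_sub ht]
    ring
  rw [hpow]

lemma fact5_succ {k n : ℕ} (hn : 1 ≤ n) (s : Fin (k+3) → ℕ) (hs : ∀ i, 1 ≤ s i) :
    Bnd k n n (fun i => s i.succ) / ((k:ℝ)+2) * ((n.choose (k+2) : ℕ) : ℝ) ^ (s 0 - 1) ≤
      (((sig (k+1) s : ℕ) : ℝ) ^ ((1:ℝ)/(s 0 : ℝ)) / (((k+1:ℕ):ℝ)+1) *
        (n:ℝ) ^ ((((k+1:ℕ):ℝ)+1) - 1/((Pprod (k+1) s : ℕ) : ℝ))) ^ (s 0) := by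
  have hn0 : (0:ℝ) < (n:ℝ) := by exact_mod_cast hn
  have hn1 : (1:ℝ) ≤ (n:ℝ) := by exact_mod_cast hn
  have ht : 1 ≤ s 0 := hs 0
  have htR : (0:ℝ) < (s 0 : ℝ) := by exact_mod_cast ht
  set s' : Fin (k+2) → ℕ := fun i => s i.succ with hs'def
  have hs'i : ∀ i, 1 ≤ s' i := fun i => hs i.succ
  have hu : 1 ≤ s' 0 := hs'i 0
  have huR : (0:ℝ) < (s' 0 : ℝ) := by exact_mod_cast hu
  have hs10 : (s' 0 : ℕ) = s 1 := by rw [hs'def]; simp [Fin.succ_zero_eq_one]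
  set σ' : ℝ := ((sig k s' : ℕ) : ℝ) with hσ'
  set P' : ℝ := ((Pprod k s' : ℕ) : ℝ) with hP'
  have hP'1 : (1:ℝ) ≤ P' := by rw [hP']; exact_mod_cast Pprod_pos hs'i
  have hP'0 : (0:ℝ) < P' := by linarith
  have hσ'0 : (0:ℝ) ≤ σ' := by rw [hσ']; exact Nat.cast_nonneg _
  have hσeq : ((sig (k+1) s : ℕ) : ℝ) = σ' + (s 1 : ℝ) - 1 := sig_succ hs
  have hPPeq : ((Pprod (k+1) s : ℕ) : ℝ) = (s 0 : ℝ) * P' := by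
    rw [Pprod_succ]; push_cast; rfl
  have hu1 : (1:ℝ) ≤ (s 1 : ℝ) := by exact_mod_cast hs 1
  set σR : ℝ := σ' + (s 1 : ℝ) - 1 with hσR
  have hσR0 : (0:ℝ) ≤ σR := by rw [hσR]; linarith
  set X : ℝ := (n:ℝ) ^ (((k:ℝ)+2) - 1/P') with hX
  have hX0 : (0:ℝ) ≤ X := by rw [hX]; positivity
  -- Step A : bound the inner Bnd
  have hA : Bnd k n n s' ≤ σR * X / ((k:ℝ)+1) := by
    have hA1 : σ' ^ ((1:ℝ)/(s' 0 : ℝ)) ≤ σ' := by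
      rw [hσ']
      exact nat_rpow_le_self _ (by positivity) (by rw [div_le_one huR]; exact_mod_cast hu)
    have hA2 : (n:ℝ) * (n:ℝ) ^ (((k:ℝ)+1) - 1/P') = X := by
      rw [hX]
      nth_rewrite 1 [← Real.rpow_one (n:ℝ)]
      rw [← Real.rpow_add hn0]
      congr 1
      ring
    have hA3 : ((n.choose (k+1) : ℕ) : ℝ) ≤ X / ((k:ℝ)+1) := by
      have hc1 : ((n.choose (k+1) : ℕ) : ℝ) ≤ (n:ℝ) ^ (k+1) / (((k+1).factorial : ℕ) : ℝ) :=
        choose_le_pow_div n (k+1)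
      have hfac : ((k:ℝ)+1) ≤ (((k+1).factorial : ℕ) : ℝ) := by
        calc ((k:ℝ)+1) = ((k+1:ℕ) : ℝ) := by push_cast; ring
        _ ≤ _ := by exact_mod_cast Nat.self_le_factorial (k+1)
      have hc2 : (n:ℝ) ^ (k+1) / (((k+1).factorial : ℕ) : ℝ) ≤ (n:ℝ) ^ (k+1) / ((k:ℝ)+1) :=
        div_le_div_of_nonneg_left (by positivity) (by positivity) hfac
      have hc3 : (n:ℝ) ^ (k+1) ≤ X := by
        rw [hX, ← Real.rpow_natCast (n:ℝ) (k+1)]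
        apply Real.rpow_le_rpow_of_exponent_le hn1
        have h1P : 1/P' ≤ 1 := by rw [div_le_one hP'0]; exact hP'1
        push_cast
        linarith
      calc ((n.choose (k+1) : ℕ) : ℝ) ≤ (n:ℝ) ^ (k+1) / ((k:ℝ)+1) := le_trans hc1 hc2
      _ ≤ X / ((k:ℝ)+1) := by gcongr
    rw [Bnd]
    calc σ' ^ ((1:ℝ)/((s' 0 : ℕ) : ℝ)) / ((k:ℝ)+1) * (n:ℝ) *
          (n:ℝ) ^ (((k:ℝ)+1) - 1/P') + (((s' 0 : ℕ):ℝ) - 1) * ((n.choose (k+1) : ℕ) : ℝ)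
        = σ' ^ ((1:ℝ)/((s' 0:ℕ) : ℝ)) * X / ((k:ℝ)+1) +
          (((s' 0:ℕ):ℝ) - 1) * ((n.choose (k+1) : ℕ) : ℝ) := by
          rw [← hA2]; ring
    _ ≤ σ' * X / ((k:ℝ)+1) + ((s 1:ℝ) - 1) * (X / ((k:ℝ)+1)) := by
          apply add_le_add
          · gcongr
          · rw [hs10]
            apply mul_le_mul_of_nonneg_left hA3 (by linarith)
    _ = σR * X / ((k:ℝ)+1) := by rw [hσR]; ring
  -- Step B : binomial coefficient bound
  have hB : ((n.choose (k+2) : ℕ) : ℝ) ≤ (n:ℝ) ^ (k+2) / ((k:ℝ)+2) := by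
    have hc1 : ((n.choose (k+2) : ℕ) : ℝ) ≤ (n:ℝ) ^ (k+2) / (((k+2).factorial : ℕ) : ℝ) :=
      choose_le_pow_div n (k+2)
    have hfac : ((k:ℝ)+2) ≤ (((k+2).factorial : ℕ) : ℝ) := by
      calc ((k:ℝ)+2) = ((k+2:ℕ) : ℝ) := by push_cast; ring
      _ ≤ _ := by exact_mod_cast Nat.self_le_factorial (k+2)
    exact le_trans hc1 (div_le_div_of_nonneg_left (by positivity) (by positivity) hfac)
  have hC : ((n.choose (k+2) : ℕ) : ℝ) ^ (s 0 - 1) ≤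
      ((n:ℝ) ^ (k+2) / ((k:ℝ)+2)) ^ (s 0 - 1) :=
    pow_le_pow_left₀ (Nat.cast_nonneg _) hB _
  have hpow2 : ((k:ℝ)+2) ^ (s 0 - 1) * ((k:ℝ)+2) = ((k:ℝ)+2) ^ (s 0) := by
    rw [← pow_succ]
    congr 1
    omega
  have e3 : X * ((n:ℝ) ^ (k+2)) ^ (s 0 - 1) = (n:ℝ) ^ ((s 0:ℝ)*((k:ℝ)+2) - 1/P') := by
    rw [← Real.rpow_natCast (n:ℝ) (k+2),
      ← Real.rpow_natCast ((n:ℝ) ^ (((k+2:ℕ)):ℝ)) (s 0 - 1),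
      ← Real.rpow_mul hn0.le, hX, ← Real.rpow_add hn0]
    congr 1
    push_cast [Nat.cast_sub ht]
    ring
  -- right-hand side simplification
  have eR : (((sig (k+1) s : ℕ) : ℝ) ^ ((1:ℝ)/(s 0 : ℝ)) / (((k+1:ℕ):ℝ)+1) *
        (n:ℝ) ^ ((((k+1:ℕ):ℝ)+1) - 1/((Pprod (k+1) s : ℕ) : ℝ))) ^ (s 0)
      = σR * (n:ℝ) ^ ((s 0:ℝ)*((k:ℝ)+2) - 1/P') / ((k:ℝ)+2) ^ (s 0) := by
    have hk2 : (((k+1:ℕ):ℝ)+1) = (k:ℝ)+2 := by push_cast; ring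
    have q1 : (σR ^ ((1:ℝ)/(s 0 : ℝ))) ^ (s 0) = σR := by
      rw [← Real.rpow_natCast (σR ^ ((1:ℝ)/(s 0 : ℝ))) (s 0),
        ← Real.rpow_mul hσR0, one_div_mul_cancel (ne_of_gt htR), Real.rpow_one]
    have q2 : ((n:ℝ) ^ (((k:ℝ)+2) - 1/((s 0:ℝ) * P'))) ^ (s 0)
        = (n:ℝ) ^ ((s 0:ℝ)*((k:ℝ)+2) - 1/P') := by
      rw [← Real.rpow_natCast ((n:ℝ) ^ (((k:ℝ)+2) - 1/((s 0:ℝ) * P'))) (s 0),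
        ← Real.rpow_mul hn0.le]
      congr 1
      field_simp
    rw [hk2, hPPeq, hσeq, mul_pow, div_pow, q1, q2]
    ring
  -- main chain
  calc Bnd k n n s' / ((k:ℝ)+2) * ((n.choose (k+2) : ℕ) : ℝ) ^ (s 0 - 1)
      ≤ (σR * X / ((k:ℝ)+1)) / ((k:ℝ)+2) * ((n:ℝ) ^ (k+2) / ((k:ℝ)+2)) ^ (s 0 - 1) := by
        apply mul_le_mul _ hC (by positivity)
          (div_nonneg (div_nonneg (mul_nonneg hσR0 hX0) (by positivity)) (by positivity))
        gcongr
  _ = σR * ((n:ℝ) ^ ((s 0:ℝ)*((k:ℝ)+2) - 1/P')) / (((k:ℝ)+1) * ((k:ℝ)+2) ^ (s 0)) := by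
        rw [div_pow, ← e3, ← hpow2]
        have h1 : ((k:ℝ)+1) ≠ 0 := by positivity
        have h2 : ((k:ℝ)+2) ≠ 0 := by positivity
        have h3 : ((k:ℝ)+2) ^ (s 0 - 1) ≠ 0 := by positivity
        field_simp
  _ ≤ σR * ((n:ℝ) ^ ((s 0:ℝ)*((k:ℝ)+2) - 1/P')) / (((k:ℝ)+2) ^ (s 0)) := by
        apply div_le_div_of_nonneg_left (mul_nonneg hσR0 (by positivity)) (by positivity)
        nlinarith [pow_nonneg (show (0:ℝ) ≤ (k:ℝ)+2 by positivity) (s 0),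
          pow_pos (show (0:ℝ) < (k:ℝ)+2 by positivity) (s 0)]
  _ = (((sig (k+1) s : ℕ) : ℝ) ^ ((1:ℝ)/(s 0 : ℝ)) / (((k+1:ℕ):ℝ)+1) *
        (n:ℝ) ^ ((((k+1:ℕ):ℝ)+1) - 1/((Pprod (k+1) s : ℕ) : ℝ))) ^ (s 0) := eR.symm

end ZProof
namespace ZProof
open Finset

theorem main_bound (k : ℕ) : ∀ (m n : ℕ), 1 ≤ m → 1 ≤ n → ∀ s : Fin (k+2) → ℕ,
    (∀ i, 1 ≤ s i) →
    ∀ H : Finset (Finset (Fin m ⊕ Fin n)), IsSemibipHG (k+2) H →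
    ¬ HasOrderedCopyHG s 0 H → (H.card : ℝ) ≤ Bnd k m n s := by
  induction k with
  | zero =>
    intro m n hm hn s hs H hH hnc
    apply generic_step hm hn s hs H hH ((s 1 - 1 : ℕ) : ℝ) (Nat.cast_nonneg _)
    · intro A hA
      exact_mod_cast Nat.cast_le.mpr (link_bound_base hs hnc hA)
    · exact fact5_base hn s hs
  | succ k ih =>
    intro m n hm hn s hs H hH hnc
    apply generic_step hm hn s hs H hH (Bnd k n n (fun i => s i.succ) / ((k:ℝ)+2))
      (div_nonneg (Bnd_nonneg _ _ _ _ (fun i => hs i.succ)) (by positivity))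
    · intro A hA
      exact link_bound_step hs hnc hA
        (fun H' h1 h2 => ih n n hn hn _ (fun i => hs i.succ) H' h1 h2)
    · exact fact5_succ hn s hs

lemma Z_le_of_all {m n r : ℕ} {s : Fin r → ℕ} {i0 : Fin r} {c : ℝ} (hc : 0 ≤ c)
    (h : ∀ H : Finset (Finset (Fin m ⊕ Fin n)), IsSemibipHG r H →
      ¬ HasOrderedCopyHG s i0 H → (H.card : ℝ) ≤ c) :
    ((ZarankiewiczHG m n r s i0 : ℕ) : ℝ) ≤ c := by
  classical
  rw [ZarankiewiczHG]
  set S : Set ℕ := {j | ∃ H : Finset (Finset (Fin m ⊕ Fin n)),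
    IsSemibipHG r H ∧ ¬ HasOrderedCopyHG s i0 H ∧ H.card = j} with hS
  by_cases hne : S.Nonempty
  · have hbdd : BddAbove S := by
      refine ⟨Fintype.card (Finset (Fin m ⊕ Fin n)), fun j hj => ?_⟩
      obtain ⟨H, _, _, rfl⟩ := hj
      exact le_trans (Finset.card_le_univ H) (le_of_eq (Finset.card_univ))
    obtain ⟨H, h1, h2, h3⟩ := Nat.sSup_mem hne hbdd
    exact h3 ▸ h H h1 h2
  · rw [Set.not_nonempty_iff_eq_empty.mp hne]
    simpa using hc

end ZProof
theorem stmt_13 (r m n : ℕ) (hr : 3 ≤ r) (hm : 1 ≤ m) (hn : 1 ≤ n)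
    (s : Fin r → ℕ) (hmono : ∀ i j : Fin r, i ≤ j → s i ≤ s j) (hs : ∀ i, 1 ≤ s i) :
    (ZarankiewiczHG m n r s ⟨0, by omega⟩ : ℝ) ≤
      ((∑ i ∈ Finset.univ.erase (⟨0, by omega⟩ : Fin r), (s i : ℝ)) - r + 1) ^
          ((1 : ℝ) / (s ⟨0, by omega⟩ : ℝ)) / (r - 1) * m *
        (n : ℝ) ^ ((r : ℝ) - 1 -
          1 / ∏ i ∈ Finset.univ.erase (⟨r - 1, by omega⟩ : Fin r), (s i : ℝ)) +
      ((s ⟨0, by omega⟩ : ℝ) - 1) * (n.choose (r - 1) : ℝ) := by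
  obtain ⟨k, rfl⟩ : ∃ k, r = k + 2 := ⟨r - 2, by omega⟩
  have hi0 : (⟨0, by omega⟩ : Fin (k+2)) = 0 := by
    apply Fin.ext
    simp
  have hlast : (⟨k+2-1, by omega⟩ : Fin (k+2)) = Fin.last (k+1) := by
    apply Fin.ext
    simp [Fin.last]
  rw [hi0, hlast]
  have hmain : ((ZarankiewiczHG m n (k+2) s 0 : ℕ) : ℝ) ≤ ZProof.Bnd k m n s :=
    ZProof.Z_le_of_all (ZProof.Bnd_nonneg _ _ _ _ hs)
      (fun H h1 h2 => ZProof.main_bound k m n hm hn s hs H h1 h2)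
  refine le_trans hmain (le_of_eq ?_)
  rw [ZProof.Bnd]
  have e1 : ((ZProof.sig k s : ℕ) : ℝ) =
      (∑ i ∈ Finset.univ.erase (0 : Fin (k+2)), (s i : ℝ)) - ((k+2:ℕ):ℝ) + 1 := by
    rw [ZProof.sig_cast hs]
    push_cast
    ring
  have e2 : ((ZProof.Pprod k s : ℕ) : ℝ) =
      ∏ i ∈ Finset.univ.erase (Fin.last (k+1)), (s i : ℝ) := by
    rw [ZProof.Pprod]
    push_cast
    rfl
  have e3 : ((k:ℝ)+1) = ((k+2:ℕ):ℝ) - 1 := by push_cast; ring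
  have e5 : n.choose (k+2-1) = n.choose (k+1) := rfl
  rw [e1, e3, e2, e5]
end
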